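/- arXiv:2602.24194 — 6 statements merged into one kernel-verified Lean document; each statement's English description precedes it below -/
import Mathlib

section
/- Consider n ≥ 2 agents on a nonatomic probability space: agent 1 has RDU functional U₁(X) = ∫₀¹ u₁(F_X⁻¹(t)) T̃′(t) dt, and each agent i = 2,…,n has EU functional U_i(X) = E_P[u_i(X)]. Fix w ∈ ℝ. Then: (i) for every weight vector λ = (λ₂,…,λₙ) with all λ_i > 0, every allocation (X₁,…,Xₙ) ∈ A(w) that maximizes U₁(X₁) + Σ_{i=2}^n λ_i U_i(X_i) over A(w) is Pareto optimal; (ii) if moreover T is convex, then every Pareto-optimal allocation in A(w) maximizes U₁(X₁) + Σ_{i=2}^n λ_i U_i(X_i) over A(w) for some weight vector λ with all λ_i > 0. -/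
open MeasureTheory Set

noncomputable section

variable {Ω : Type*} [MeasurableSpace Ω]

/-- The cumulative distribution function `F_X(x) = P(X ≤ x)` of a random variable. -/
def cdfR (P : Measure Ω) (X : Ω → ℝ) (x : ℝ) : ℝ := (P {ω | X ω ≤ x}).toReal

/-- The left-continuous quantile function `F_X⁻¹(t) = inf {x | F_X(x) ≥ t}`. -/
def quantR (P : Measure Ω) (X : Ω → ℝ) (t : ℝ) : ℝ := sInf {x : ℝ | t ≤ cdfR P X x}

/-- A bounded (measurable) random variable. -/
def IsBddRV (X : Ω → ℝ) : Prop := Measurable X ∧ ∃ C : ℝ, ∀ ω, |X ω| ≤ C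

/-- Comonotonicity of two random variables. -/
def ComonRV (Y Z : Ω → ℝ) : Prop := ∀ ω ω' : Ω, 0 ≤ (Y ω - Y ω') * (Z ω - Z ω')

/-- `U` is uniformly distributed on `(0,1)` under `P`. -/
def UnifOn01 (P : Measure Ω) (U : Ω → ℝ) : Prop :=
  Measurable U ∧ ∀ t ∈ Icc (0:ℝ) 1, cdfR P U t = t

/-- A nonatomic measure. -/
def NonatomicM (P : Measure Ω) : Prop :=
  ∀ s : Set Ω, MeasurableSet s → P s ≠ 0 →
    ∃ t : Set Ω, MeasurableSet t ∧ t ⊆ s ∧ 0 < P t ∧ P t < P s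

/-- Expected utility. -/
def EUf (P : Measure Ω) (u : ℝ → ℝ) (X : Ω → ℝ) : ℝ := ∫ ω, u (X ω) ∂P

/-- The conjugate `T̃(t) = 1 - T(1-t)` of a probability weighting function. -/
def conjW (T : ℝ → ℝ) : ℝ → ℝ := fun t => 1 - T (1 - t)

/-- Rank-dependent utility `∫₀¹ u(F_X⁻¹(t)) Tc′(t) dt`, where `Tc` is the conjugate
probability weighting function. -/
def RDUf (P : Measure Ω) (u : ℝ → ℝ) (Tc : ℝ → ℝ) (X : Ω → ℝ) : ℝ :=
  ∫ t in Ioo (0:ℝ) 1, u (quantR P X t) * deriv Tc t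

/-- A probability weighting function: maps `[0,1]` to `[0,1]`, twice differentiable,
strictly increasing, `T(0) = 0`, `T(1) = 1`. -/
def IsPWF (T : ℝ → ℝ) : Prop :=
  (∀ t ∈ Icc (0:ℝ) 1, T t ∈ Icc (0:ℝ) 1) ∧ StrictMonoOn T (Icc (0:ℝ) 1) ∧
    (∀ t ∈ Icc (0:ℝ) 1, DifferentiableAt ℝ T t) ∧
    (∀ t ∈ Icc (0:ℝ) 1, DifferentiableAt ℝ (deriv T) t) ∧ T 0 = 0 ∧ T 1 = 1

/-- A utility function: twice differentiable, strictly concave, strictly increasing. -/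
def IsUtility (u : ℝ → ℝ) : Prop :=
  (∀ x, DifferentiableAt ℝ u x) ∧ (∀ x, DifferentiableAt ℝ (deriv u) x) ∧
    StrictConcaveOn ℝ univ u ∧ StrictMono u

/-- `d` is the convex envelope of `g` on `[0,1]`: the greatest convex function
below `g` on `[0,1]`. -/
def IsConvexEnvelope (g d : ℝ → ℝ) : Prop :=
  ConvexOn ℝ (Icc (0:ℝ) 1) d ∧ (∀ t ∈ Icc (0:ℝ) 1, d t ≤ g t) ∧
    ∀ h : ℝ → ℝ, ConvexOn ℝ (Icc (0:ℝ) 1) h → (∀ t ∈ Icc (0:ℝ) 1, h t ≤ g t) →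
      ∀ t ∈ Icc (0:ℝ) 1, h t ≤ d t

/-- Feasible allocations: bounded random variables summing a.s. to the constant `w`. -/
def AllocC (P : Measure Ω) {m : ℕ} (w : ℝ) (X : Fin m → Ω → ℝ) : Prop :=
  (∀ i, IsBddRV (X i)) ∧ ∀ᵐ ω ∂P, (∑ i, X i ω) = w

/-- A quantile function: a nondecreasing left-continuous function on `(0,1)`. -/
def IsQuantFun (f : ℝ → ℝ) : Prop :=
  MonotoneOn f (Ioo (0:ℝ) 1) ∧ ∀ t ∈ Ioo (0:ℝ) 1, ContinuousWithinAt f (Iic t) t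

/-- `I_i := (u_i′)⁻¹`, the inverse marginal utility. -/
def invMarg (u : ℝ → ℝ) : ℝ → ℝ := Function.invFun (deriv u)

end

noncomputable section

open MeasureTheory Set

/-- Utilitarian welfare: agent `0` is the RDU agent (unweighted), agents `i ≠ 0` are
EU agents with weights `lam i`. -/
def welfareW {Ω : Type*} [MeasurableSpace Ω] (P : Measure Ω) {n : ℕ}
    (u : Fin (n + 1) → ℝ → ℝ) (T : ℝ → ℝ) (lam : Fin (n + 1) → ℝ)
    (X : Fin (n + 1) → Ω → ℝ) : ℝ :=
  RDUf P (u 0) (conjW T) (X 0) +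
    ∑ i ∈ Finset.univ.erase 0, lam i * EUf P (u i) (X i)

/-!
Part (i) holds because positive weights make the welfare strictly increasing along Pareto
improvements.

For part (ii), read `RDUf` as `∫₀¹ u(F⁻¹(t)) D(t) dt` with the density `D(t) = T′(1 - t)`.
Convexity of `T` makes `D` decreasing, so by Chebyshev's integral inequality
`∫ F⁻¹ D ≤ ∫ F⁻¹ · ∫ D = E X`; with the tangent line of `u` at `E X` this gives
`RDUf(X) ≤ u(E X)`, the bound Jensen's inequality gives for the EU agents. Hence every agent
weakly prefers the expectation of their share, a feasible allocation, and at a Pareto optimum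
`U_i(X_i) = u_i(E X_i)` for all `i`. The weights `λ_i = u₀′(E X₀) / u_i′(E X_i)` equalize the
weighted marginal utilities there, and the tangent lines of the `u_i` at `E X_i` bound the
welfare of every feasible allocation by that of `X`.
-/

open Filter Topology ProbabilityTheory

instance isProbabilityMeasure_volume_restrict_Ioo :
    IsProbabilityMeasure (volume.restrict (Ioo (0:ℝ) 1)) :=
  ⟨by simp [Real.volume_Ioo]⟩

theorem volume_restrict_Ioo_Iic {b : ℝ} (hb1 : b ≤ 1) :
    volume.restrict (Ioo (0:ℝ) 1) (Iic b) = ENNReal.ofReal b := by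
  rw [Measure.restrict_congr_set Ioo_ae_eq_Ioc, Measure.restrict_apply measurableSet_Iic,
    Iic_inter_Ioc_of_le hb1, Real.volume_Ioc, sub_zero]

theorem sInf_le_iff_le_cdf (μ : Measure ℝ) [IsProbabilityMeasure μ] {t : ℝ}
    (ht : t ∈ Ioo (0:ℝ) 1) (x : ℝ) :
    sInf {y | t ≤ cdf μ y} ≤ x ↔ t ≤ cdf μ x := by
  set S := {y | t ≤ cdf μ y}
  have hne : S.Nonempty :=
    ((tendsto_cdf_atTop μ).eventually (eventually_ge_nhds ht.2)).exists
  have hbdd : BddBelow S := by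
    obtain ⟨y₀, hy₀⟩ :=
      ((tendsto_cdf_atBot μ).eventually (eventually_lt_nhds ht.1)).exists_forall_of_atBot
    exact ⟨y₀, fun y hy => le_of_not_gt fun h => (hy₀ y h.le).not_ge hy⟩
  refine ⟨fun h => le_trans ?_ (monotone_cdf μ h), fun h => csInf_le hbdd h⟩
  -- the infimum lies in `S` because the cdf is right-continuous
  exact ContinuousWithinAt.closure_le (csInf_mem_closure hne hbdd) continuousWithinAt_const
    (((cdf μ).right_continuous _).mono fun y hy => csInf_le hbdd hy) fun y hy => hy

section Quantile

variable {Ω : Type*} [MeasurableSpace Ω] {P : Measure Ω} [IsProbabilityMeasure P]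
  {X : Ω → ℝ}

theorem cdfR_eq_cdf_map (hX : Measurable X) : cdfR P X = cdf (P.map X) := by
  have := Measure.isProbabilityMeasure_map (μ := P) hX.aemeasurable
  ext x
  rw [cdf_eq_real, map_measureReal_apply hX measurableSet_Iic]
  rfl

theorem quantR_le_iff (hX : Measurable X) {t : ℝ} (ht : t ∈ Ioo (0:ℝ) 1) (x : ℝ) :
    quantR P X t ≤ x ↔ t ≤ cdfR P X x := by
  have := Measure.isProbabilityMeasure_map (μ := P) hX.aemeasurable
  rw [quantR, cdfR_eq_cdf_map hX]
  exact sInf_le_iff_le_cdf _ ht x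

theorem monotoneOn_quantR (hX : Measurable X) : MonotoneOn (quantR P X) (Ioo 0 1) :=
  fun _ hs _ ht hst => (quantR_le_iff hX hs _).2 (hst.trans ((quantR_le_iff hX ht _).1 le_rfl))

theorem aemeasurable_quantR (hX : Measurable X) :
    AEMeasurable (quantR P X) (volume.restrict (Ioo (0:ℝ) 1)) :=
  aemeasurable_restrict_of_monotoneOn measurableSet_Ioo (monotoneOn_quantR hX)

theorem map_quantR (hX : Measurable X) :
    (volume.restrict (Ioo (0:ℝ) 1)).map (quantR P X) = P.map X := by
  have := Measure.isProbabilityMeasure_map (μ := P) hX.aemeasurable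
  have := Measure.isProbabilityMeasure_map (aemeasurable_quantR (P := P) hX)
  refine Measure.ext_of_Iic _ _ fun a => ?_
  have hpre : quantR P X ⁻¹' Iic a ∩ Ioo 0 1 = Iic (cdfR P X a) ∩ Ioo 0 1 := by
    ext t
    simp only [mem_inter_iff, mem_preimage, mem_Iic, and_congr_left_iff]
    exact fun ht => quantR_le_iff hX ht a
  rw [Measure.map_apply_of_aemeasurable (aemeasurable_quantR hX) measurableSet_Iic,
    Measure.restrict_apply' measurableSet_Ioo, hpre, ← Measure.restrict_apply' measurableSet_Ioo,
    cdfR_eq_cdf_map hX, volume_restrict_Ioo_Iic (cdf_le_one _ a), ofReal_cdf]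

theorem integral_comp_quantR (hX : Measurable X) {g : ℝ → ℝ}
    (hg : AEStronglyMeasurable g (P.map X)) :
    ∫ t in Ioo (0:ℝ) 1, g (quantR P X t) = ∫ ω, g (X ω) ∂P := by
  rw [← integral_map (aemeasurable_quantR hX) (by rwa [map_quantR hX]), map_quantR hX,
    integral_map hX.aemeasurable hg]

theorem integrable_comp_quantR (hX : Measurable X) {g : ℝ → ℝ}
    (hg : AEStronglyMeasurable g (P.map X)) (hgX : Integrable (fun ω => g (X ω)) P) :
    Integrable (fun t => g (quantR P X t)) (volume.restrict (Ioo (0:ℝ) 1)) := by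
  change Integrable (g ∘ quantR P X) _
  rw [← integrable_map_measure (by rwa [map_quantR hX]) (aemeasurable_quantR hX), map_quantR hX]
  exact (integrable_map_measure hg hX.aemeasurable).2 hgX

end Quantile

theorem integral_mul_le_integral_mul_integral_of_antivaryOn {α : Type*} [MeasurableSpace α]
    {μ : Measure α} [IsProbabilityMeasure μ] {f g : α → ℝ} {s : Set α}
    (hfg : AntivaryOn f g s) (hs : ∀ᵐ x ∂μ, x ∈ s) (hf : Integrable f μ) (hg : Integrable g μ)
    (hfgi : Integrable (fun x => f x * g x) μ) :
    ∫ x, f x * g x ∂μ ≤ (∫ x, f x ∂μ) * ∫ x, g x ∂μ := by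
  have hs₂ : ∀ᵐ z ∂μ.prod μ, z.1 ∈ s ∧ z.2 ∈ s :=
    (Measure.quasiMeasurePreserving_fst.ae hs).and (Measure.quasiMeasurePreserving_snd.ae hs)
  have hdiag₁ : Integrable (fun z : α × α => f z.1 * g z.1) (μ.prod μ) := hfgi.comp_fst μ
  have hdiag₂ : Integrable (fun z : α × α => f z.2 * g z.2) (μ.prod μ) := hfgi.comp_snd μ
  -- integrate the rearrangement inequality `f x g x + f y g y ≤ f x g y + g x f y` over `μ ⊗ μ`
  have key := integral_mono_ae (hdiag₁.add hdiag₂) ((hf.mul_prod hg).add (hg.mul_prod hf))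
    (hs₂.mono fun z hz => by
      have := antivaryOn_iff_mul_rearrangement.1 hfg hz.1 hz.2
      simp only [Pi.add_apply]
      linarith)
  simp only [Pi.add_apply] at key
  rw [integral_add hdiag₁ hdiag₂, integral_add (hf.mul_prod hg) (hg.mul_prod hf),
    integral_fun_fst (fun x => f x * g x), integral_fun_snd (fun x => f x * g x),
    integral_prod_mul f g, integral_prod_mul g f] at key
  simp only [probReal_univ, one_smul] at key
  linarith

theorem ConcaveOn.le_add_deriv_mul_sub {S : Set ℝ} {u : ℝ → ℝ} (hu : ConcaveOn ℝ S u)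
    {c y : ℝ} (hc : c ∈ S) (hy : y ∈ S) (hd : DifferentiableAt ℝ u c) :
    u y ≤ u c + deriv u c * (y - c) := by
  rcases lt_trichotomy y c with h | rfl | h
  · have := hu.deriv_le_slope hy hc h hd
    rw [slope_def_field, le_div_iff₀ (sub_pos.2 h)] at this
    linarith
  · simp
  · have := hu.slope_le_deriv hc hy h hd
    rw [slope_def_field, div_le_iff₀ (sub_pos.2 h)] at this
    linarith

theorem ConcaveOn.integral_comp_mul_le {α : Type*} [MeasurableSpace α] {μ : Measure α}
    {u : ℝ → ℝ} {f D : α → ℝ} {c : ℝ} (hu : ConcaveOn ℝ univ u) (hd : DifferentiableAt ℝ u c)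
    (hD : ∀ᵐ x ∂μ, 0 ≤ D x) (hDi : Integrable D μ) (hD₁ : ∫ x, D x ∂μ = 1)
    (hfD : Integrable (fun x => f x * D x) μ) (hufD : Integrable (fun x => u (f x) * D x) μ) :
    ∫ x, u (f x) * D x ∂μ ≤ u c + deriv u c * (∫ x, f x * D x ∂μ - c) := by
  have hlin : Integrable (fun x => (u c - deriv u c * c) * D x + deriv u c * (f x * D x)) μ :=
    (hDi.const_mul _).add (hfD.const_mul _)
  calc ∫ x, u (f x) * D x ∂μ
      ≤ ∫ x, ((u c - deriv u c * c) * D x + deriv u c * (f x * D x)) ∂μ :=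
        integral_mono_ae hufD hlin (hD.mono fun x hx => by
          have := mul_le_mul_of_nonneg_right
            (hu.le_add_deriv_mul_sub (mem_univ c) (mem_univ (f x)) hd) hx
          linear_combination this)
    _ = u c + deriv u c * (∫ x, f x * D x ∂μ - c) := by
        rw [integral_add (hDi.const_mul _) (hfD.const_mul _), integral_const_mul,
          integral_const_mul, hD₁]
        ring

section Weighting

variable {T : ℝ → ℝ}

theorem hasDerivAt_conjW {t : ℝ} (h : DifferentiableAt ℝ T (1 - t)) :
    HasDerivAt (conjW T) (deriv T (1 - t)) t := by
  unfold conjW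
  simpa using (h.hasDerivAt.comp t ((hasDerivAt_id t).const_sub 1)).const_sub 1

theorem deriv_conjW (hT : IsPWF T) {t : ℝ} (ht : t ∈ Icc (0:ℝ) 1) :
    deriv (conjW T) t = deriv T (1 - t) :=
  (hasDerivAt_conjW (hT.2.2.1 _ (Icc.one_sub_mem ht))).deriv

theorem integral_deriv_conjW (hT : IsPWF T) : ∫ t in Ioo (0:ℝ) 1, deriv (conjW T) t = 1 := by
  obtain ⟨-, -, hd, hd₂, h₀, h₁⟩ := hT
  have hderiv : ∀ t ∈ Icc (0:ℝ) 1, HasDerivAt (conjW T) (deriv T (1 - t)) t := fun t ht =>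
    hasDerivAt_conjW (hd _ (Icc.one_sub_mem ht))
  have hcont : ContinuousOn (fun t => deriv T (1 - t)) (Icc 0 1) := fun t ht =>
    ((hd₂ _ (Icc.one_sub_mem ht)).continuousAt.comp
      (continuous_const.sub continuous_id).continuousAt).continuousWithinAt
  rw [setIntegral_congr_fun measurableSet_Ioo fun t ht => (hderiv t (Ioo_subset_Icc_self ht)).deriv,
    ← integral_Ioc_eq_integral_Ioo, ← intervalIntegral.integral_of_le zero_le_one,
    intervalIntegral.integral_eq_sub_of_hasDerivAt (by rwa [uIcc_of_le zero_le_one])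
      (hcont.intervalIntegrable_of_Icc zero_le_one)]
  simp [conjW, h₀, h₁]

theorem antitoneOn_deriv_conjW (hT : IsPWF T) (hTc : ConvexOn ℝ (Icc 0 1) T) :
    AntitoneOn (deriv (conjW T)) (Icc 0 1) := fun s hs t ht hst => by
  rw [deriv_conjW hT hs, deriv_conjW hT ht]
  exact hTc.monotoneOn_deriv hT.2.2.1 (Icc.one_sub_mem ht) (Icc.one_sub_mem hs) (by linarith)

theorem deriv_conjW_mem_Icc (hT : IsPWF T) (hTc : ConvexOn ℝ (Icc 0 1) T) {t : ℝ}
    (ht : t ∈ Ioo (0:ℝ) 1) : deriv (conjW T) t ∈ Icc 0 (deriv T 1) := by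
  have hs := Ioo.one_sub_mem ht
  have hslope := hTc.slope_le_deriv (left_mem_Icc.2 zero_le_one) (Ioo_subset_Icc_self hs) hs.1
    (hT.2.2.1 _ (Ioo_subset_Icc_self hs))
  have hslope_nonneg : 0 ≤ slope T 0 (1 - t) := by
    rw [slope_def_field]
    exact div_nonneg (sub_nonneg.2 (hT.2.1.monotoneOn (left_mem_Icc.2 zero_le_one)
      (Ioo_subset_Icc_self hs) hs.1.le)) (by linarith [hs.1])
  refine ⟨(deriv_conjW hT (Ioo_subset_Icc_self ht)).symm ▸ hslope_nonneg.trans hslope, ?_⟩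
  simpa [deriv_conjW hT (left_mem_Icc.2 zero_le_one)] using
    antitoneOn_deriv_conjW hT hTc (left_mem_Icc.2 zero_le_one) (Ioo_subset_Icc_self ht) ht.1.le

end Weighting

section Bounds

variable {Ω : Type*} [MeasurableSpace Ω] {P : Measure Ω} [IsProbabilityMeasure P]
  {X : Ω → ℝ} {u T : ℝ → ℝ}

theorem IsBddRV.integrable (hX : IsBddRV X) : Integrable X P := by
  obtain ⟨hXm, C, hC⟩ := hX
  exact Integrable.of_bound hXm.aestronglyMeasurable C (ae_of_all _ hC)

theorem IsBddRV.comp_continuous (hX : IsBddRV X) (hu : Continuous u) :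
    IsBddRV (fun ω => u (X ω)) := by
  obtain ⟨hXm, C, hC⟩ := hX
  obtain ⟨M, hM⟩ := (isCompact_Icc (a := -C) (b := C)).exists_bound_of_continuousOn hu.continuousOn
  exact ⟨hu.measurable.comp hXm, M, fun ω => hM _ (abs_le.1 (hC ω))⟩

theorem IsUtility.differentiable (hu : IsUtility u) : Differentiable ℝ u := hu.1

theorem IsUtility.concaveOn (hu : IsUtility u) : ConcaveOn ℝ univ u := hu.2.2.1.concaveOn

theorem IsUtility.deriv_pos (hu : IsUtility u) (x : ℝ) : 0 < deriv u x := by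
  have hslope := hu.concaveOn.slope_le_deriv (mem_univ x) (mem_univ (x + 1))
    (lt_add_one x) (hu.differentiable x)
  rw [slope_def_field, add_sub_cancel_left, div_one] at hslope
  linarith [hu.2.2.2 (lt_add_one x)]

theorem quantR_const {c t : ℝ} (ht : t ∈ Ioo (0:ℝ) 1) : quantR P (fun _ => c) t = c := by
  have hS : {x | t ≤ cdfR P (fun _ : Ω => c) x} = Ici c := by
    ext x
    by_cases hcx : c ≤ x
    · simp [cdfR, hcx, ht.2.le]
    · simp [cdfR, hcx, ht.1]
  rw [quantR, hS, csInf_Ici]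

theorem RDUf_const (hT : IsPWF T) (c : ℝ) : RDUf P u (conjW T) (fun _ => c) = u c := by
  rw [RDUf, setIntegral_congr_fun measurableSet_Ioo fun t ht => by rw [quantR_const ht],
    integral_const_mul, integral_deriv_conjW hT, mul_one]

theorem RDUf_le_of_convexOn (hT : IsPWF T) (hTc : ConvexOn ℝ (Icc 0 1) T)
    (hu : ConcaveOn ℝ univ u) (hud : Differentiable ℝ u) (hum : Monotone u)
    (hX : Measurable X) (hXi : Integrable X P) (huX : Integrable (fun ω => u (X ω)) P) :
    RDUf P u (conjW T) X ≤ u (∫ ω, X ω ∂P) := by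
  set μ := volume.restrict (Ioo (0:ℝ) 1)
  set D := deriv (conjW T)
  set c := ∫ ω, X ω ∂P
  have hDb : ∀ᵐ t ∂μ, D t ∈ Icc 0 (deriv T 1) :=
    ae_restrict_of_forall_mem measurableSet_Ioo fun t => deriv_conjW_mem_Icc hT hTc
  have hDm : AEStronglyMeasurable D μ := (measurable_deriv _).aestronglyMeasurable
  have hDn : ∀ᵐ t ∂μ, ‖D t‖ ≤ deriv T 1 :=
    hDb.mono fun t ht => by rw [Real.norm_of_nonneg ht.1]; exact ht.2
  have hDi : Integrable D μ := .of_bound hDm _ hDn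
  have hqi : Integrable (quantR P X) μ :=
    integrable_comp_quantR hX (g := id) aestronglyMeasurable_id hXi
  have huqi : Integrable (fun t => u (quantR P X t)) μ :=
    integrable_comp_quantR hX hud.continuous.aestronglyMeasurable huX
  -- the weights favour low quantiles, so they lower the mean (Chebyshev)
  have hcheb : ∫ t, quantR P X t * D t ∂μ ≤ c := by
    refine (integral_mul_le_integral_mul_integral_of_antivaryOn
      ((monotoneOn_quantR hX).antivaryOn ((antitoneOn_deriv_conjW hT hTc).mono
        Ioo_subset_Icc_self)) (ae_restrict_mem measurableSet_Ioo) hqi hDi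
      (hqi.mul_bdd hDm hDn)).trans_eq ?_
    rw [integral_deriv_conjW hT, mul_one]
    exact integral_comp_quantR hX (g := id) aestronglyMeasurable_id
  calc RDUf P u (conjW T) X = ∫ t, u (quantR P X t) * D t ∂μ := rfl
    _ ≤ u c + deriv u c * (∫ t, quantR P X t * D t ∂μ - c) :=
      hu.integral_comp_mul_le (hud c) (hDb.mono fun _ h => h.1) hDi (integral_deriv_conjW hT)
        (hqi.mul_bdd hDm hDn) (huqi.mul_bdd hDm hDn)
    _ ≤ u c := add_le_of_nonpos_right
      (mul_nonpos_of_nonneg_of_nonpos hum.deriv_nonneg (sub_nonpos.2 hcheb))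

end Bounds

theorem sum_mul_le_sum_mul_of_mul_deriv_eq {ι : Type*} (s : Finset ι) {v : ι → ℝ → ℝ}
    {lam c c' : ι → ℝ} {A : ℝ} (hv : ∀ i ∈ s, ConcaveOn ℝ univ (v i))
    (hvd : ∀ i ∈ s, DifferentiableAt ℝ (v i) (c i)) (hlam : ∀ i ∈ s, 0 ≤ lam i)
    (hA : ∀ i ∈ s, lam i * deriv (v i) (c i) = A) (hsum : ∑ i ∈ s, c' i = ∑ i ∈ s, c i) :
    ∑ i ∈ s, lam i * v i (c' i) ≤ ∑ i ∈ s, lam i * v i (c i) :=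
  calc ∑ i ∈ s, lam i * v i (c' i) ≤ ∑ i ∈ s, (lam i * v i (c i) + A * (c' i - c i)) :=
        Finset.sum_le_sum fun i hi => by
          have := mul_le_mul_of_nonneg_left
            ((hv i hi).le_add_deriv_mul_sub (mem_univ _) (mem_univ (c' i)) (hvd i hi)) (hlam i hi)
          rw [← hA i hi]
          linear_combination this
    _ = ∑ i ∈ s, lam i * v i (c i) := by
        rw [Finset.sum_add_distrib, ← Finset.mul_sum, Finset.sum_sub_distrib, hsum, sub_self,
          mul_zero, add_zero]

section Economy

variable {Ω : Type*} [MeasurableSpace Ω] {P : Measure Ω} {n : ℕ}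
  {u : Fin (n + 1) → ℝ → ℝ} {T : ℝ → ℝ} {w : ℝ}

variable (P u T) in
def agentUtility (i : Fin (n + 1)) : (Ω → ℝ) → ℝ :=
  if i = 0 then RDUf P (u 0) (conjW T) else EUf P (u i)

variable (P u T) in
def ParetoDominates (X X' : Fin (n + 1) → Ω → ℝ) : Prop :=
  (∀ i, agentUtility P u T i (X i) ≤ agentUtility P u T i (X' i)) ∧
    ∃ i, agentUtility P u T i (X i) < agentUtility P u T i (X' i)

theorem agentUtility_const [IsProbabilityMeasure P] (hT : IsPWF T) (i : Fin (n + 1)) (c : ℝ) :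
    agentUtility P u T i (fun _ => c) = u i c := by
  unfold agentUtility
  split_ifs with h
  · subst h
    exact RDUf_const hT c
  · simp [EUf]

theorem agentUtility_le_of_convexOn [IsProbabilityMeasure P] (hT : IsPWF T)
    (hTc : ConvexOn ℝ (Icc 0 1) T) (hu : ∀ i, IsUtility (u i)) {X : Ω → ℝ} (hX : IsBddRV X)
    (i : Fin (n + 1)) : agentUtility P u T i X ≤ u i (∫ ω, X ω ∂P) := by
  have huX := (hX.comp_continuous (hu i).differentiable.continuous).integrable (P := P)
  unfold agentUtility
  split_ifs with h
  · subst h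
    exact RDUf_le_of_convexOn hT hTc (hu 0).concaveOn (hu 0).differentiable
      (hu 0).2.2.2.monotone hX.1 hX.integrable huX
  · exact (hu i).concaveOn.le_map_integral (hu i).differentiable.continuous.continuousOn
      isClosed_univ (ae_of_all _ fun _ => mem_univ _) hX.integrable huX

theorem AllocC.sum_integral [IsProbabilityMeasure P] {m : ℕ} {X : Fin m → Ω → ℝ}
    (hX : AllocC P w X) : ∑ i, ∫ ω, X i ω ∂P = w := by
  rw [← integral_finsetSum _ fun i _ => (hX.1 i).integrable, integral_congr_ae hX.2]
  simp

theorem allocC_const {m : ℕ} {c : Fin m → ℝ} (hc : ∑ i, c i = w) :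
    AllocC P w (fun i _ => c i) :=
  ⟨fun i => ⟨measurable_const, |c i|, fun _ => le_rfl⟩, ae_of_all _ fun _ => hc⟩

theorem welfareW_eq_sum (lam : Fin (n + 1) → ℝ) (X : Fin (n + 1) → Ω → ℝ) :
    welfareW P u T lam X = ∑ i, Function.update lam 0 1 i * agentUtility P u T i (X i) := by
  rw [welfareW, ← Finset.add_sum_erase _ _ (Finset.mem_univ 0)]
  refine congrArg₂ (· + ·) (by simp [agentUtility]) (Finset.sum_congr rfl fun i hi => ?_)
  rw [Function.update_of_ne (Finset.ne_of_mem_erase hi), agentUtility,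
    if_neg (Finset.ne_of_mem_erase hi)]

theorem welfareW_lt_of_paretoDominates {lam : Fin (n + 1) → ℝ} (hlam : ∀ i, i ≠ 0 → 0 < lam i)
    {X X' : Fin (n + 1) → Ω → ℝ} (h : ParetoDominates P u T X X') :
    welfareW P u T lam X < welfareW P u T lam X' := by
  have hpos : ∀ i, 0 < Function.update lam 0 1 i := fun i => by
    rcases eq_or_ne i 0 with rfl | hi
    · simp
    · simpa [hi] using hlam i hi
  obtain ⟨hle, i, hlt⟩ := h
  rw [welfareW_eq_sum, welfareW_eq_sum]
  exact Finset.sum_lt_sum (fun j _ => mul_le_mul_of_nonneg_left (hle j) (hpos j).le)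
    ⟨i, Finset.mem_univ _, mul_lt_mul_of_pos_left hlt (hpos i)⟩

variable [IsProbabilityMeasure P] {X : Fin (n + 1) → Ω → ℝ}

theorem agentUtility_eq_of_not_paretoDominated (hT : IsPWF T) (hTc : ConvexOn ℝ (Icc 0 1) T)
    (hu : ∀ i, IsUtility (u i)) (hX : AllocC P w X)
    (hPO : ¬ ∃ X', AllocC P w X' ∧ ParetoDominates P u T X X') (i : Fin (n + 1)) :
    agentUtility P u T i (X i) = u i (∫ ω, X i ω ∂P) := by
  have hle : ∀ j, agentUtility P u T j (X j) ≤ agentUtility P u T j (fun _ => ∫ ω, X j ω ∂P) :=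
    fun j => by
      rw [agentUtility_const hT]
      exact agentUtility_le_of_convexOn hT hTc hu (hX.1 j) j
  by_contra hne
  -- otherwise handing every agent the expectation of their share is a Pareto improvement
  refine hPO ⟨fun j _ => ∫ ω, X j ω ∂P, allocC_const hX.sum_integral, hle, i, ?_⟩
  exact (hle i).lt_of_ne (by rwa [agentUtility_const hT])

theorem exists_weights_of_not_paretoDominated (hT : IsPWF T) (hTc : ConvexOn ℝ (Icc 0 1) T)
    (hu : ∀ i, IsUtility (u i)) (hX : AllocC P w X)
    (hPO : ¬ ∃ X', AllocC P w X' ∧ ParetoDominates P u T X X') :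
    ∃ lam : Fin (n + 1) → ℝ, (∀ i, i ≠ 0 → 0 < lam i) ∧
      ∀ X', AllocC P w X' → welfareW P u T lam X' ≤ welfareW P u T lam X := by
  set c : Fin (n + 1) → ℝ := fun i => ∫ ω, X i ω ∂P
  -- the weights equalize the weighted marginal utilities at the expected shares
  set lam : Fin (n + 1) → ℝ := fun i => deriv (u 0) (c 0) / deriv (u i) (c i)
  have hlam : ∀ i, 0 < lam i := fun i => div_pos ((hu 0).deriv_pos _) ((hu i).deriv_pos _)
  have hlam₀ : Function.update lam 0 1 = lam :=
    Function.update_eq_self_iff.2 (div_self ((hu 0).deriv_pos _).ne').symm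
  refine ⟨lam, fun i _ => hlam i, fun X' hX' => ?_⟩
  rw [welfareW_eq_sum, welfareW_eq_sum, hlam₀]
  calc ∑ i, lam i * agentUtility P u T i (X' i)
      ≤ ∑ i, lam i * u i (∫ ω, X' i ω ∂P) := Finset.sum_le_sum fun i _ =>
        mul_le_mul_of_nonneg_left (agentUtility_le_of_convexOn hT hTc hu (hX'.1 i) i) (hlam i).le
    _ ≤ ∑ i, lam i * u i (c i) :=
        sum_mul_le_sum_mul_of_mul_deriv_eq _ (fun i _ => (hu i).concaveOn)
          (fun i _ => (hu i).differentiable _) (fun i _ => (hlam i).le)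
          (fun i _ => div_mul_cancel₀ _ ((hu i).deriv_pos _).ne')
          (by rw [hX'.sum_integral, hX.sum_integral])
    _ = ∑ i, lam i * agentUtility P u T i (X i) := by
        simp_rw [agentUtility_eq_of_not_paretoDominated hT hTc hu hX hPO, c]

end Economy

theorem statement0_general
    {Ω : Type*} [MeasurableSpace Ω] (P : Measure Ω) [IsProbabilityMeasure P]
    (n : ℕ)
    (T : ℝ → ℝ) (hT : IsPWF T)
    (u : Fin (n + 1) → ℝ → ℝ) (hu : ∀ i, IsUtility (u i))
    (w : ℝ) :
    (∀ lam : Fin (n + 1) → ℝ, (∀ i, i ≠ 0 → 0 < lam i) →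
      ∀ X : Fin (n + 1) → Ω → ℝ, AllocC P w X →
        (∀ X' : Fin (n + 1) → Ω → ℝ, AllocC P w X' →
          welfareW P u T lam X' ≤ welfareW P u T lam X) →
        ¬ ∃ X' : Fin (n + 1) → Ω → ℝ, AllocC P w X' ∧
          (∀ i, (if i = 0 then RDUf P (u 0) (conjW T) else EUf P (u i)) (X i) ≤
            (if i = 0 then RDUf P (u 0) (conjW T) else EUf P (u i)) (X' i)) ∧
          ∃ i, (if i = 0 then RDUf P (u 0) (conjW T) else EUf P (u i)) (X i) <
            (if i = 0 then RDUf P (u 0) (conjW T) else EUf P (u i)) (X' i))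
    ∧
    (ConvexOn ℝ (Icc (0:ℝ) 1) T →
      ∀ X : Fin (n + 1) → Ω → ℝ, AllocC P w X →
        (¬ ∃ X' : Fin (n + 1) → Ω → ℝ, AllocC P w X' ∧
          (∀ i, (if i = 0 then RDUf P (u 0) (conjW T) else EUf P (u i)) (X i) ≤
            (if i = 0 then RDUf P (u 0) (conjW T) else EUf P (u i)) (X' i)) ∧
          ∃ i, (if i = 0 then RDUf P (u 0) (conjW T) else EUf P (u i)) (X i) <
            (if i = 0 then RDUf P (u 0) (conjW T) else EUf P (u i)) (X' i)) →
        ∃ lam : Fin (n + 1) → ℝ, (∀ i, i ≠ 0 → 0 < lam i) ∧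
          ∀ X' : Fin (n + 1) → Ω → ℝ, AllocC P w X' →
            welfareW P u T lam X' ≤ welfareW P u T lam X) :=
  ⟨fun _ hlam _ _ hmax ⟨X', hX', hdom⟩ =>
      (hmax X' hX').not_gt (welfareW_lt_of_paretoDominates hlam hdom),
    fun hTc _ hX hPO => exists_weights_of_not_paretoDominated hT hTc hu hX hPO⟩

/-- In an economy with one RDU agent (agent `0`) and `n` EU agents sharing
the common belief `P`, with no aggregate uncertainty:
(i) every maximizer of the weighted utilitarian welfare over `A(w)` is Pareto optimal;
(ii) if `T` is convex on `[0,1]`, every Pareto-optimal allocation in `A(w)` maximizes the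
weighted utilitarian welfare for some strictly positive weight vector. -/
theorem statement0
    {Ω : Type*} [MeasurableSpace Ω] (P : Measure Ω) [IsProbabilityMeasure P]
    (hP : NonatomicM P)
    (n : ℕ) (hn : 1 ≤ n)
    (T : ℝ → ℝ) (hT : IsPWF T)
    (u : Fin (n + 1) → ℝ → ℝ) (hu : ∀ i, IsUtility (u i))
    (w : ℝ) :
    (∀ lam : Fin (n + 1) → ℝ, (∀ i, i ≠ 0 → 0 < lam i) →
      ∀ X : Fin (n + 1) → Ω → ℝ, AllocC P w X →
        (∀ X' : Fin (n + 1) → Ω → ℝ, AllocC P w X' →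
          welfareW P u T lam X' ≤ welfareW P u T lam X) →
        ¬ ∃ X' : Fin (n + 1) → Ω → ℝ, AllocC P w X' ∧
          (∀ i, (if i = 0 then RDUf P (u 0) (conjW T) else EUf P (u i)) (X i) ≤
            (if i = 0 then RDUf P (u 0) (conjW T) else EUf P (u i)) (X' i)) ∧
          ∃ i, (if i = 0 then RDUf P (u 0) (conjW T) else EUf P (u i)) (X i) <
            (if i = 0 then RDUf P (u 0) (conjW T) else EUf P (u i)) (X' i))
    ∧
    (ConvexOn ℝ (Icc (0:ℝ) 1) T →
      ∀ X : Fin (n + 1) → Ω → ℝ, AllocC P w X →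
        (¬ ∃ X' : Fin (n + 1) → Ω → ℝ, AllocC P w X' ∧
          (∀ i, (if i = 0 then RDUf P (u 0) (conjW T) else EUf P (u i)) (X i) ≤
            (if i = 0 then RDUf P (u 0) (conjW T) else EUf P (u i)) (X' i)) ∧
          ∃ i, (if i = 0 then RDUf P (u 0) (conjW T) else EUf P (u i)) (X i) <
            (if i = 0 then RDUf P (u 0) (conjW T) else EUf P (u i)) (X' i)) →
        ∃ lam : Fin (n + 1) → ℝ, (∀ i, i ≠ 0 → 0 < lam i) ∧
          ∀ X' : Fin (n + 1) → Ω → ℝ, AllocC P w X' →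
            welfareW P u T lam X' ≤ welfareW P u T lam X) :=
  statement0_general P n T hT u hu w

end
end

section
/- Let T̃ : [0,1] → [0,1] be twice differentiable and strictly increasing with T̃(0) = 0 and T̃(1) = 1, and suppose T̃ is S-shaped with inflection point p̄ ∈ (0,1), i.e., convex on [0, p̄] and concave on [p̄, 1]. Define p* := inf{p ∈ [0,1) : T̃′(p) ≥ (1 − T̃(p))/(1 − p)}. Then p* ∈ [0, p̄], and the convex envelope δ of T̃ on [0,1] is given by δ(p) = T̃(p) for p ≤ p*, and δ(p) = T̃(p*) + ((1 − T̃(p*))/(1 − p*))·(p − p*) for p > p*. -/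
open MeasureTheory Set

/-!
Let `k` be the slope of the chord from `(p*, T̃ p*)` to `(1, 1)`. Concavity on `[p̄, 1]` puts `p̄`
in the set defining `p*`, so `p* ≤ p̄`. Continuity of `T̃′` at `p*` gives `k ≤ T̃′ p*`, and, when
`p* > 0`, also `T̃′ p* ≤ k` because the points left of `p*` violate the defining inequality.
So the line `L` through `(p*, T̃ p*)` of slope `k` supports the convex part of `T̃` on `[0, p̄]`,
and it lies below the concave part on `[p̄, 1]` because it does so at `p̄` and at `1`. Gluing `T̃`
on `[0, p*]` to `L` therefore gives a convex minorant, and any convex minorant lies below `L` on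
`[p*, 1]` because it does so at both ends.
-/

open Set

lemma ConvexOn.le_on_segment_of_concaveOn {E : Type*} [AddCommGroup E] [Module ℝ E]
    {s : Set E} {f g : E → ℝ} (hf : ConvexOn ℝ s f) (hg : ConcaveOn ℝ s g) {x y z : E}
    (hx : x ∈ s) (hy : y ∈ s) (hz : z ∈ segment ℝ x y) (hfgx : f x ≤ g x) (hfgy : f y ≤ g y) :
    f z ≤ g z := by
  have := (hf.sub hg).le_on_segment hx hy hz
  simp only [Pi.sub_apply] at this
  linarith [max_le (sub_nonpos.2 hfgx) (sub_nonpos.2 hfgy)]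

lemma ConvexOn.antitoneOn_of_le_right {f : ℝ → ℝ} {a b : ℝ} (hf : ConvexOn ℝ (Icc a b) f)
    (hmin : ∀ x ∈ Icc a b, f b ≤ f x) : AntitoneOn f (Icc a b) := by
  intro x hx y hy hxy
  have hseg : y ∈ segment ℝ x b := by rw [segment_eq_Icc hx.2]; exact ⟨hxy, hy.2⟩
  exact (hf.le_on_segment hx (right_mem_Icc.2 (hx.1.trans hx.2)) hseg).trans
    (max_le le_rfl (hmin x hx))

lemma convexOn_const_add_mul_sub {s : Set ℝ} (hs : Convex ℝ s) (c k b : ℝ) :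
    ConvexOn ℝ s fun p => c + k * (p - b) :=
  ⟨hs, fun x _ y _ μ ν _ _ hμν => le_of_eq <| by
    simp only [smul_eq_mul]; linear_combination (k * b - c) * hμν⟩

lemma concaveOn_const_add_mul_sub {s : Set ℝ} (hs : Convex ℝ s) (c k b : ℝ) :
    ConcaveOn ℝ s fun p => c + k * (p - b) :=
  ⟨hs, fun x _ y _ μ ν _ _ hμν => ge_of_eq <| by
    simp only [smul_eq_mul]; linear_combination (k * b - c) * hμν⟩

lemma ConvexOn.ite_add_mul_sub {f : ℝ → ℝ} {a b c k : ℝ} (hf : ConvexOn ℝ (Icc a b) f)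
    (hb : b ∈ Icc a c) (hbelow : ∀ x ∈ Icc a b, f b + k * (x - b) ≤ f x) :
    ConvexOn ℝ (Icc a c) fun p => if p ≤ b then f p else f b + k * (p - b) := by
  set L : ℝ → ℝ := fun p => f b + k * (p - b)
  -- The glued function is `L + (f - L) ∘ (min · b)`; `f - L` is convex, nonnegative and
  -- vanishes at `b`, hence antitone on `[a, b]`, so composing with the concave `min · b` is convex.
  have hφ : ConvexOn ℝ (Icc a b) (f - L) :=
    hf.sub (concaveOn_const_add_mul_sub (convex_Icc a b) _ _ _)
  have hφ_anti : AntitoneOn (f - L) (Icc a b) :=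
    hφ.antitoneOn_of_le_right fun x hx => by simpa [L] using hbelow x hx
  have hmin : ConcaveOn ℝ (Icc a c) fun p => min p b :=
    (concaveOn_id (convex_Icc a c)).inf (concaveOn_const b (convex_Icc a c))
  have himage : (fun p => min p b) '' Icc a c = Icc a b := by
    refine Subset.antisymm (image_subset_iff.2 fun p hp => ⟨le_min hp.1 hb.1, min_le_right p b⟩)
      fun x hx => ⟨x, ⟨hx.1, hx.2.trans hb.2⟩, min_eq_left hx.2⟩
  rw [← himage] at hφ hφ_anti
  have hsplit : (fun p => if p ≤ b then f p else L p) = L + (f - L) ∘ fun p => min p b := by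
    funext p
    rcases le_or_gt p b with hpb | hpb
    · simp [hpb]
    · simp [L, hpb.le, not_le.2 hpb]
  rw [hsplit]
  exact (convexOn_const_add_mul_sub (convex_Icc a c) (f b) k b).add
    (hφ.comp_concaveOn hmin hφ_anti)

lemma ConvexOn.add_mul_sub_le_of_le_deriv {S : Set ℝ} {f : ℝ → ℝ} {x y m : ℝ}
    (hf : ConvexOn ℝ S f) (hx : x ∈ S) (hy : y ∈ S) (hxy : x ≤ y) (hd : DifferentiableAt ℝ f x)
    (hm : m ≤ deriv f x) : f x + m * (y - x) ≤ f y := by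
  rcases hxy.eq_or_lt with rfl | hxy
  · simp
  have hslope := hf.deriv_le_slope hx hy hxy hd
  rw [slope_def_field, le_div_iff₀ (sub_pos.2 hxy)] at hslope
  linarith [mul_le_mul_of_nonneg_right hm (sub_nonneg.2 hxy.le)]

lemma ConvexOn.add_mul_sub_le_of_deriv_le {S : Set ℝ} {f : ℝ → ℝ} {x y m : ℝ}
    (hf : ConvexOn ℝ S f) (hx : x ∈ S) (hy : y ∈ S) (hyx : y < x) (hd : DifferentiableAt ℝ f x)
    (hm : deriv f x ≤ m) : f x + m * (y - x) ≤ f y := by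
  have hslope := hf.slope_le_deriv hy hx hyx hd
  rw [slope_def_field, div_le_iff₀ (sub_pos.2 hyx)] at hslope
  linarith [mul_le_mul_of_nonneg_right hm (sub_nonneg.2 hyx.le)]

lemma add_mul_sub_le_of_convexOn_of_concaveOn {g : ℝ → ℝ} {pbar q k : ℝ}
    (hconv : ConvexOn ℝ (Icc 0 pbar) g) (hconc : ConcaveOn ℝ (Icc pbar 1) g)
    (hq : q ∈ Icc 0 pbar) (hd : DifferentiableAt ℝ g q)
    (hk_le : k ≤ deriv g q) (hk_ge : 0 < q → deriv g q ≤ k) (hk1 : g q + k * (1 - q) ≤ g 1) :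
    ∀ t ∈ Icc (0:ℝ) 1, g q + k * (t - q) ≤ g t := by
  have hright : ∀ t ∈ Icc q pbar, g q + k * (t - q) ≤ g t := fun t ht =>
    hconv.add_mul_sub_le_of_le_deriv hq ⟨hq.1.trans ht.1, ht.2⟩ ht.1 hd hk_le
  intro t ht
  rcases lt_or_ge t q with htq | hqt
  · exact hconv.add_mul_sub_le_of_deriv_le hq ⟨ht.1, htq.le.trans hq.2⟩ htq hd
      (hk_ge (ht.1.trans_lt htq))
  rcases le_or_gt t pbar with htp | hpt
  · exact hright t ⟨hqt, htp⟩
  have hp1 : pbar ≤ 1 := hpt.le.trans ht.2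
  exact (convexOn_const_add_mul_sub (convex_Icc pbar 1) _ _ _).le_on_segment_of_concaveOn hconc
    (left_mem_Icc.2 hp1) (right_mem_Icc.2 hp1) (by rw [segment_eq_Icc hp1]; exact ⟨hpt.le, ht.2⟩)
    (hright pbar ⟨hq.2, le_rfl⟩) hk1

lemma isConvexEnvelope_ite_add_mul_sub {g : ℝ → ℝ} {q k : ℝ} (hq : q ∈ Ico (0:ℝ) 1)
    (hconv : ConvexOn ℝ (Icc 0 q) g) (hbelow : ∀ t ∈ Icc (0:ℝ) 1, g q + k * (t - q) ≤ g t)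
    (hk1 : g 1 ≤ g q + k * (1 - q)) :
    IsConvexEnvelope g fun p => if p ≤ q then g p else g q + k * (p - q) := by
  have hq1 : q ≤ 1 := hq.2.le
  refine ⟨hconv.ite_add_mul_sub ⟨hq.1, hq1⟩ fun x hx => hbelow x ⟨hx.1, hx.2.trans hq1⟩,
    fun t ht => ?_, fun h hh hle t ht => ?_⟩ <;> dsimp only
  · split_ifs
    exacts [le_rfl, hbelow t ht]
  split_ifs with htq
  · exact hle t ht
  refine (hh.subset (Icc_subset_Icc hq.1 le_rfl) (convex_Icc q 1)).le_on_segment_of_concaveOn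
    (concaveOn_const_add_mul_sub (convex_Icc q 1) _ _ _) (left_mem_Icc.2 hq1)
    (right_mem_Icc.2 hq1) ?_ (by simpa using hle q ⟨hq.1, hq1⟩)
    ((hle 1 (right_mem_Icc.2 zero_le_one)).trans hk1)
  rw [segment_eq_Icc hq1]
  exact ⟨(not_le.1 htq).le, ht.2⟩

lemma IsGLB.le_of_setOf_le {u v : ℝ → ℝ} {a b s : ℝ}
    (hs : IsGLB {p | p ∈ Ico a b ∧ u p ≤ v p} s) (has : a < s) (hsb : s ≤ b)
    (hu : ContinuousAt u s) (hv : ContinuousAt v s) : v s ≤ u s :=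
  ContinuousWithinAt.closure_le (s := Ico a s)
    (by rw [closure_Ico has.ne]; exact right_mem_Icc.2 has.le)
    hv.continuousWithinAt hu.continuousWithinAt fun p hp =>
      le_of_not_ge fun h => (hs.1 ⟨⟨hp.1, hp.2.trans_le hsb⟩, h⟩).not_gt hp.2

theorem statement8_general
    (g : ℝ → ℝ)
    (hd1 : ∀ t ∈ Icc (0:ℝ) 1, DifferentiableAt ℝ g t)
    (hd2 : ∀ t ∈ Icc (0:ℝ) 1, DifferentiableAt ℝ (deriv g) t)
    (h1 : g 1 = 1)
    (pbar : ℝ) (hpbar : pbar ∈ Ioo (0:ℝ) 1)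
    (hconv : ConvexOn ℝ (Icc (0:ℝ) pbar) g)
    (hconc : ConcaveOn ℝ (Icc pbar 1) g)
    (pstar : ℝ)
    (hpstar : pstar = sInf {p : ℝ | p ∈ Ico (0:ℝ) 1 ∧ (1 - g p) / (1 - p) ≤ deriv g p}) :
    pstar ∈ Icc 0 pbar ∧
      IsConvexEnvelope g
        (fun p => if p ≤ pstar then g p
          else g pstar + (1 - g pstar) / (1 - pstar) * (p - pstar)) := by
  set S := {p : ℝ | p ∈ Ico (0:ℝ) 1 ∧ (1 - g p) / (1 - p) ≤ deriv g p}
  set k := (1 - g pstar) / (1 - pstar)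
  have hpbar1 : pbar ∈ Icc (0:ℝ) 1 := Ioo_subset_Icc_self hpbar
  have hpbarS : pbar ∈ S := by
    refine ⟨Ioo_subset_Ico_self hpbar, ?_⟩
    simpa [slope_def_field, h1] using hconc.slope_le_deriv (left_mem_Icc.2 hpbar1.2)
      (right_mem_Icc.2 hpbar1.2) hpbar.2 (hd1 pbar hpbar1)
  have hglb : IsGLB S pstar := hpstar ▸ isGLB_csInf ⟨pbar, hpbarS⟩ ⟨0, fun p hp => hp.1.1⟩
  have hpstar_mem : pstar ∈ Icc 0 pbar := ⟨hglb.2 fun p hp => hp.1.1, hglb.1 hpbarS⟩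
  have hpstar1 : pstar < 1 := hpstar_mem.2.trans_lt hpbar.2
  have hpstar_Icc : pstar ∈ Icc (0:ℝ) 1 := ⟨hpstar_mem.1, hpstar1.le⟩
  have hchord : ContinuousAt (fun p => (1 - g p) / (1 - p)) pstar :=
    (continuousAt_const.sub (hd1 pstar hpstar_Icc).continuousAt).div
      (continuousAt_const.sub continuousAt_id) (sub_ne_zero.2 hpstar1.ne')
  have hderiv : ContinuousAt (deriv g) pstar := (hd2 pstar hpstar_Icc).continuousAt
  have hk_le : k ≤ deriv g pstar :=
    ContinuousWithinAt.closure_le (hglb.mem_closure ⟨pbar, hpbarS⟩) hchord.continuousWithinAt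
      hderiv.continuousWithinAt fun p hp => hp.2
  have hk_ge : 0 < pstar → deriv g pstar ≤ k := fun hpos =>
    hglb.le_of_setOf_le hpos hpstar1.le hchord hderiv
  have hk1 : g pstar + k * (1 - pstar) = g 1 := by
    rw [h1, div_mul_cancel₀ _ (sub_ne_zero.2 hpstar1.ne')]; ring
  refine ⟨hpstar_mem, isConvexEnvelope_ite_add_mul_sub ⟨hpstar_mem.1, hpstar1⟩
    (hconv.subset (Icc_subset_Icc le_rfl hpstar_mem.2) (convex_Icc _ _))
    (add_mul_sub_le_of_convexOn_of_concaveOn hconv hconc hpstar_mem (hd1 pstar hpstar_Icc)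
      hk_le hk_ge hk1.le) hk1.ge⟩

/-- For a twice-differentiable, strictly increasing `T̃ : [0,1] → [0,1]`
with `T̃(0) = 0`, `T̃(1) = 1` that is S-shaped (convex on `[0, p̄]`, concave on `[p̄, 1]`),
the point `p* = inf{p ∈ [0,1) : T̃′(p) ≥ (1 − T̃(p))/(1 − p)}` lies in `[0, p̄]` and the
convex envelope of `T̃` equals `T̃` on `[0, p*]` and is the chord to `(1,1)` afterwards. -/
theorem statement8
    (g : ℝ → ℝ)
    (hmap : ∀ t ∈ Icc (0:ℝ) 1, g t ∈ Icc (0:ℝ) 1)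
    (hd1 : ∀ t ∈ Icc (0:ℝ) 1, DifferentiableAt ℝ g t)
    (hd2 : ∀ t ∈ Icc (0:ℝ) 1, DifferentiableAt ℝ (deriv g) t)
    (hmono : StrictMonoOn g (Icc (0:ℝ) 1))
    (h0 : g 0 = 0) (h1 : g 1 = 1)
    (pbar : ℝ) (hpbar : pbar ∈ Ioo (0:ℝ) 1)
    (hconv : ConvexOn ℝ (Icc (0:ℝ) pbar) g)
    (hconc : ConcaveOn ℝ (Icc pbar 1) g)
    (pstar : ℝ)
    (hpstar : pstar = sInf {p : ℝ | p ∈ Ico (0:ℝ) 1 ∧ (1 - g p) / (1 - p) ≤ deriv g p}) :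
    pstar ∈ Icc 0 pbar ∧
      IsConvexEnvelope g
        (fun p => if p ≤ pstar then g p
          else g pstar + (1 - g pstar) / (1 - pstar) * (p - pstar)) :=
  statement8_general g hd1 hd2 h1 pbar hpbar hconv hconc pstar hpstar
end

section
/- Let T̃ : [0,1] → [0,1] be twice differentiable and strictly increasing with T̃(0) = 0 and T̃(1) = 1, and suppose T̃ is inverse S-shaped with inflection point p̄ ∈ (0,1), i.e., concave on [0, p̄] and convex on [p̄, 1]. Define p* := sup{p ∈ [0,1) : T̃′(p) ≤ T̃(p)/p}. Then p* ∈ [p̄, 1], and the convex envelope δ of T̃ on [0,1] is given by δ(p) = (T̃(p*)/p*)·p for p ≤ p*, and δ(p) = T̃(p) for p > p*. -/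
open MeasureTheory Set

noncomputable section

open MeasureTheory Set

/-- For a twice-differentiable, strictly increasing `T̃ : [0,1] → [0,1]`
with `T̃(0) = 0`, `T̃(1) = 1` that is inverse S-shaped (concave on `[0, p̄]`, convex on
`[p̄, 1]`), the point `p* = sup{p ∈ [0,1) : T̃′(p) ≤ T̃(p)/p}` lies in `[p̄, 1]` and the
convex envelope of `T̃` is the chord from the origin on `[0, p*]` and equals `T̃`
afterwards. -/
theorem statement9
    (g : ℝ → ℝ)
    (hmap : ∀ t ∈ Icc (0:ℝ) 1, g t ∈ Icc (0:ℝ) 1)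
    (hd1 : ∀ t ∈ Icc (0:ℝ) 1, DifferentiableAt ℝ g t)
    (hd2 : ∀ t ∈ Icc (0:ℝ) 1, DifferentiableAt ℝ (deriv g) t)
    (hmono : StrictMonoOn g (Icc (0:ℝ) 1))
    (h0 : g 0 = 0) (h1 : g 1 = 1)
    (pbar : ℝ) (hpbar : pbar ∈ Ioo (0:ℝ) 1)
    (hconc : ConcaveOn ℝ (Icc (0:ℝ) pbar) g)
    (hconv : ConvexOn ℝ (Icc pbar 1) g)
    (pstar : ℝ)
    (hpstar : pstar = sSup {p : ℝ | p ∈ Ico (0:ℝ) 1 ∧ deriv g p ≤ g p / p}) :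
    pstar ∈ Icc pbar 1 ∧
      IsConvexEnvelope g
        (fun p => if p ≤ pstar then g pstar / pstar * p else g p) := by
  have hSdef : {p : ℝ | p ∈ Ico (0:ℝ) 1 ∧ deriv g p ≤ g p / p} =
      {p : ℝ | p ∈ Ico (0:ℝ) 1 ∧ deriv g p ≤ g p / p} := rfl
  obtain ⟨hpb0, hpb1⟩ := hpbar
  -- on the concave part the derivative is below the chord from the origin
  have hchord : ∀ p, 0 < p → p ≤ pbar → deriv g p ≤ g p / p := by
    intro p hp0 hppb
    have h := hconc.deriv_le_slope (x := 0) (y := p)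
      ⟨le_refl 0, hpb0.le⟩ ⟨hp0.le, hppb⟩ hp0
      (hd1 p ⟨hp0.le, hppb.trans hpb1.le⟩)
    rwa [slope_def_field, h0, sub_zero, sub_zero] at h
  set S : Set ℝ := {p : ℝ | p ∈ Ico (0:ℝ) 1 ∧ deriv g p ≤ g p / p} with hS
  have hpbS : pbar ∈ S := ⟨⟨hpb0.le, hpb1⟩, hchord pbar hpb0 le_rfl⟩
  have hSne : S.Nonempty := ⟨pbar, hpbS⟩
  have hSbdd : BddAbove S := ⟨1, fun p hp => hp.1.2.le⟩
  have hpseq : pstar = sSup S := hpstar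
  have hge : pbar ≤ pstar := hpseq ▸ le_csSup hSbdd hpbS
  have hle : pstar ≤ 1 := hpseq ▸ csSup_le hSne fun p hp => hp.1.2.le
  have hps0 : 0 < pstar := lt_of_lt_of_le hpb0 hge
  have hsub : Icc pbar (1:ℝ) ⊆ Icc (0:ℝ) 1 := Icc_subset_Icc hpb0.le le_rfl
  have hDmono : MonotoneOn (deriv g) (Icc pbar 1) :=
    hconv.monotoneOn_deriv fun x hx => hd1 x (hsub hx)
  -- phi(p) = p g'(p) - g p is monotone on [pbar, 1]
  have hφmono : ∀ p ∈ Icc pbar (1:ℝ), ∀ q ∈ Icc pbar (1:ℝ), p ≤ q →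
      p * deriv g p - g p ≤ q * deriv g q - g q := by
    intro p hp q hq hpq
    rcases eq_or_lt_of_le hpq with rfl | hlt
    · exact le_rfl
    · have hs := hconv.slope_le_deriv hp hq hlt (hd1 q (hsub hq))
      rw [slope_def_field] at hs
      have h2 : g q - g p ≤ deriv g q * (q - p) := by
        rw [div_le_iff₀ (by linarith [hp.1, hq.1] : (0:ℝ) < q - p)] at hs
        linarith
      have h3 : deriv g p ≤ deriv g q := hDmono hp hq hpq
      nlinarith [mul_nonneg (show (0:ℝ) ≤ p by linarith [hp.1]) (sub_nonneg.2 h3)]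
  -- phi is nonpositive before pstar
  have hφneg : ∀ p, 0 < p → p < pstar → p * deriv g p - g p ≤ 0 := by
    intro p hp0 hpps
    by_cases hpb : p ≤ pbar
    · have h := hchord p hp0 hpb
      have := (le_div_iff₀ hp0).mp h
      linarith
    · push_neg at hpb
      obtain ⟨q, hqS, hpq⟩ := exists_lt_of_lt_csSup hSne (hpseq ▸ hpps)
      have hq0 : 0 < q := lt_trans hp0 hpq
      have hφq : q * deriv g q - g q ≤ 0 := by
        have := (le_div_iff₀ hq0).mp hqS.2
        linarith
      have hq1 : q < 1 := hqS.1.2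
      have := hφmono p ⟨hpb.le, by linarith⟩ q ⟨by linarith, hq1.le⟩ hpq.le
      linarith
  -- phi is nonnegative after pstar
  have hφpos' : ∀ p, pstar < p → p < 1 → 0 ≤ p * deriv g p - g p := by
    intro p hpsp hp1
    have hp0 : 0 < p := lt_trans hps0 hpsp
    have hpnot : p ∉ S := fun h => absurd (hpseq ▸ le_csSup hSbdd h) (not_le.2 hpsp)
    have hnd : ¬ deriv g p ≤ g p / p := fun h => hpnot ⟨⟨hp0.le, hp1⟩, h⟩
    push_neg at hnd
    have := (div_lt_iff₀ hp0).mp hnd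
    linarith
  have hφpos : ∀ p, pstar < p → p ≤ 1 → 0 ≤ p * deriv g p - g p := by
    intro p hpsp hp1
    rcases lt_or_eq_of_le hp1 with h | h
    · exact hφpos' p hpsp h
    · subst h
      have hps1 : pstar < 1 := hpsp
      set r := (pstar + 1)/2 with hr
      have h1 : pstar < r := by rw [hr]; linarith
      have h2 : r < 1 := by rw [hr]; linarith
      have h3 := hφpos' r h1 h2
      have h4 := hφmono r ⟨by linarith, h2.le⟩ 1 ⟨by linarith, le_rfl⟩ h2.le
      linarith
  -- the chord lower bound
  have hdiffpt : ∀ x : ℝ, 0 < x → x ∈ Icc (0:ℝ) 1 →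
      HasDerivAt (fun q => g q / q) ((deriv g x * x - g x * 1) / x ^ 2) x := by
    intro x hx0 hx
    exact ((hd1 x hx).hasDerivAt).div (hasDerivAt_id x) (ne_of_gt hx0)
  have hcontq : ∀ a b : ℝ, 0 < a → b ≤ 1 → ContinuousOn (fun q => g q / q) (Icc a b) := by
    intro a b ha hb1
    apply ContinuousOn.div
    · intro x hx
      exact (hd1 x ⟨le_trans ha.le hx.1, le_trans hx.2 hb1⟩).continuousAt.continuousWithinAt
    · exact continuousOn_id
    · intro x hx
      exact ne_of_gt (lt_of_lt_of_le ha hx.1)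
  have hlow : ∀ p ∈ Icc (0:ℝ) 1, g pstar / pstar * p ≤ g p := by
    intro p hp
    rcases eq_or_lt_of_le hp.1 with h | hp0
    · rw [← h, mul_zero, h0]
    rcases le_or_gt p pstar with hpps | hpsp
    · rcases eq_or_lt_of_le hpps with h | hlt
      · subst h
        rw [div_mul_cancel₀ _ (ne_of_gt hps0)]
      · have hA : AntitoneOn (fun q => g q / q) (Icc p pstar) := by
          apply antitoneOn_of_deriv_nonpos (convex_Icc p pstar)
          · exact hcontq p pstar hp0 hle
          · intro x hx
            rw [interior_Icc] at hx
            have hx0 : 0 < x := lt_trans hp0 hx.1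
            exact (hdiffpt x hx0 ⟨hx0.le, le_trans hx.2.le hle⟩).differentiableAt.differentiableWithinAt
          · intro x hx
            rw [interior_Icc] at hx
            have hx0 : 0 < x := lt_trans hp0 hx.1
            rw [(hdiffpt x hx0 ⟨hx0.le, le_trans hx.2.le hle⟩).deriv]
            apply div_nonpos_of_nonpos_of_nonneg
            · have := hφneg x hx0 hx.2
              nlinarith
            · positivity
        have hAB := hA (left_mem_Icc.2 hlt.le) (right_mem_Icc.2 hlt.le) hlt.le
        have := mul_le_mul_of_nonneg_right hAB hp0.le
        rwa [div_mul_cancel₀ _ (ne_of_gt hp0)] at this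
    · have hM : MonotoneOn (fun q => g q / q) (Icc pstar p) := by
        apply monotoneOn_of_deriv_nonneg (convex_Icc pstar p)
        · exact hcontq pstar p hps0 hp.2
        · intro x hx
          rw [interior_Icc] at hx
          have hx0 : 0 < x := lt_trans hps0 hx.1
          exact (hdiffpt x hx0 ⟨hx0.le, le_trans hx.2.le hp.2⟩).differentiableAt.differentiableWithinAt
        · intro x hx
          rw [interior_Icc] at hx
          have hx0 : 0 < x := lt_trans hps0 hx.1
          rw [(hdiffpt x hx0 ⟨hx0.le, le_trans hx.2.le hp.2⟩).deriv]
          apply div_nonneg _ (by positivity)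
          have := hφpos x hx.1 (le_trans hx.2.le hp.2)
          nlinarith
      have hMB := hM (left_mem_Icc.2 hpsp.le) (right_mem_Icc.2 hpsp.le) hpsp.le
      have := mul_le_mul_of_nonneg_right hMB hp0.le
      rwa [div_mul_cancel₀ _ (ne_of_gt hp0)] at this
  have hgps : g pstar / pstar * pstar = g pstar := div_mul_cancel₀ _ (ne_of_gt hps0)
  have hδ_ge : ∀ p, pstar ≤ p →
      (if p ≤ pstar then g pstar / pstar * p else g p) = g p := by
    intro p hp
    by_cases h : p ≤ pstar
    · have hpp : p = pstar := le_antisymm h hp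
      rw [if_pos h, hpp, hgps]
    · rw [if_neg h]
  have hgconv : ConvexOn ℝ (Icc pstar 1) g :=
    hconv.subset (Icc_subset_Icc_left hge) (convex_Icc _ _)
  -- convexity of the envelope candidate
  have hconvδ : ConvexOn ℝ (Icc (0:ℝ) 1)
      (fun p => if p ≤ pstar then g pstar / pstar * p else g p) := by
    apply convexOn_of_slope_mono_adjacent (convex_Icc 0 1)
    intro x y z hx hz hxy hyz
    have hy : y ∈ Icc (0:ℝ) 1 := ⟨le_trans hx.1 hxy.le, le_trans hyz.le hz.2⟩
    rcases le_or_gt z pstar with hzps | hpsz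
    · have hxps : x ≤ pstar := le_trans (hxy.trans hyz).le hzps
      have hyps : y ≤ pstar := le_trans hyz.le hzps
      rw [if_pos hxps, if_pos hyps, if_pos hzps,
        div_le_div_iff₀ (by linarith : (0:ℝ) < y - x) (by linarith : (0:ℝ) < z - y)]
      apply le_of_eq; ring
    rcases le_or_gt pstar x with hpsx | hxps
    · rw [hδ_ge x hpsx, hδ_ge y (le_trans hpsx hxy.le),
        hδ_ge z (le_trans hpsx (hxy.trans hyz).le)]
      exact hgconv.slope_mono_adjacent ⟨hpsx, hx.2⟩
        ⟨le_trans hpsx (hxy.trans hyz).le, hz.2⟩ hxy hyz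
    rcases le_or_gt y pstar with hyps | hpsy
    · rw [if_pos hxps.le, if_pos hyps, hδ_ge z hpsz.le]
      have h1 : (g pstar / pstar * y - g pstar / pstar * x) / (y - x) = g pstar / pstar := by
        rw [div_eq_iff (ne_of_gt (sub_pos.2 hxy))]; ring
      rw [h1, le_div_iff₀ (sub_pos.2 hyz)]
      have := hlow z hz
      nlinarith
    · rw [if_pos hxps.le, hδ_ge y hpsy.le, hδ_ge z hpsz.le]
      have key : (0:ℝ) ≤ (g y - g pstar / pstar * y) * (pstar - x) :=
        mul_nonneg (sub_nonneg.2 (hlow y hy)) (sub_nonneg.2 hxps.le)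
      have key1 : (g y - g pstar / pstar * x) / (y - x)
          ≤ (g y - g pstar / pstar * pstar) / (y - pstar) := by
        rw [div_le_div_iff₀ (sub_pos.2 hxy) (sub_pos.2 hpsy)]
        nlinarith
      have key1' : (g y - g pstar / pstar * pstar) / (y - pstar)
          = (g y - g pstar) / (y - pstar) := by rw [hgps]
      have key2 : (g y - g pstar) / (y - pstar) ≤ (g z - g y) / (z - y) :=
        hgconv.slope_mono_adjacent (left_mem_Icc.2 hle) ⟨hpsz.le, hz.2⟩ hpsy hyz
      calc (g y - g pstar / pstar * x) / (y - x)
          ≤ (g y - g pstar / pstar * pstar) / (y - pstar) := key1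
        _ = (g y - g pstar) / (y - pstar) := key1'
        _ ≤ (g z - g y) / (z - y) := key2
  refine ⟨⟨hge, hle⟩, hconvδ, ?_, ?_⟩
  · intro t ht
    show (if t ≤ pstar then g pstar / pstar * t else g t) ≤ g t
    by_cases h : t ≤ pstar
    · rw [if_pos h]; exact hlow t ht
    · rw [if_neg h]
  · intro h hc hb t ht
    show h t ≤ (if t ≤ pstar then g pstar / pstar * t else g t)
    by_cases hts : t ≤ pstar
    · rw [if_pos hts]
      have h0' : h 0 ≤ 0 := by
        have := hb 0 ⟨le_rfl, zero_le_one⟩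
        rwa [h0] at this
      have hps' : h pstar ≤ g pstar := hb pstar ⟨hps0.le, hle⟩
      set lam := t / pstar with hlam
      have hlam0 : 0 ≤ lam := div_nonneg ht.1 hps0.le
      have hlam1 : lam ≤ 1 := by
        rw [hlam, div_le_one hps0]; exact hts
      have hcomb := hc.2 (show (0:ℝ) ∈ Icc (0:ℝ) 1 from ⟨le_rfl, zero_le_one⟩)
        (show pstar ∈ Icc (0:ℝ) 1 from ⟨hps0.le, hle⟩)
        (show 0 ≤ 1 - lam by linarith) hlam0 (by ring)
      have harg : (1 - lam) • (0:ℝ) + lam • pstar = t := by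
        rw [smul_eq_mul, smul_eq_mul, mul_zero, zero_add, hlam,
          div_mul_cancel₀ _ (ne_of_gt hps0)]
      rw [harg, smul_eq_mul, smul_eq_mul] at hcomb
      have t1 : (1 - lam) * h 0 ≤ (1 - lam) * 0 :=
        mul_le_mul_of_nonneg_left h0' (by linarith)
      have t2 : lam * h pstar ≤ lam * g pstar := mul_le_mul_of_nonneg_left hps' hlam0
      have heq : g pstar / pstar * t = lam * g pstar := by
        rw [hlam]; field_simp
      rw [heq]
      linarith
    · rw [if_neg hts]; exact hb t ht


end
end

section
/- Let α > 1 and consider the Prelec weighting function T(p) = exp(−(−ln p)^α) with conjugate T̃(p) = 1 − exp(−(−ln(1−p))^α). Then the point p*(α) := inf{p ∈ [0,1) : T̃′(p) ≥ (1 − T̃(p))/(1 − p)} satisfies p*(α) = 1 − exp(−α^{−1/(α−1)}). -/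
/-!
With `u = -log (1 - p)` one has `1 - T̃(p) = exp (-u ^ α)` and
`T̃'(p) = exp (-u ^ α) * α * u ^ (α - 1) / (1 - p)`, so the defining inequality of the set
reduces to `1 ≤ α * u ^ (α - 1)`. For `α > 1` this holds exactly when `u ≥ α ^ (-1 / (α - 1))`,
and `u` is increasing in `p`, so the set is the interval `[1 - exp (-α ^ (-1 / (α - 1))), 1)`.
-/

open Set

noncomputable section

/-- The conjugate `T̃(p) = 1 − exp(−(−ln(1−p))^α)` of the Prelec probability weighting
function `T(p) = exp(−(−ln p)^α)`. -/
def prelecConj (α : ℝ) : ℝ → ℝ :=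
  fun p => 1 - Real.exp (-((-Real.log (1 - p)) ^ α))

lemma one_sub_prelecConj (α p : ℝ) :
    1 - prelecConj α p = Real.exp (-((-Real.log (1 - p)) ^ α)) :=
  sub_sub_cancel 1 _

lemma prelecConj_hasDerivAt {α : ℝ} (hα : 1 ≤ α) {p : ℝ} (hp : p < 1) :
    HasDerivAt (prelecConj α)
      (Real.exp (-((-Real.log (1 - p)) ^ α)) *
        (α * (-Real.log (1 - p)) ^ (α - 1) / (1 - p))) p := by
  have hlog : HasDerivAt (fun x : ℝ => Real.log (1 - x)) (-1 / (1 - p)) p :=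
    ((hasDerivAt_id p).const_sub 1).log (sub_pos.mpr hp).ne'
  refine (((hlog.neg.rpow_const (p := α) (Or.inr hα)).neg.exp).const_sub 1).congr_deriv ?_
  simp only [Pi.neg_apply]
  ring

lemma prelecConj_tangency_iff {α : ℝ} (hα : 1 ≤ α) {p : ℝ} (hp : p < 1) :
    (1 - prelecConj α p) / (1 - p) ≤ deriv (prelecConj α) p ↔
      1 ≤ α * (-Real.log (1 - p)) ^ (α - 1) := by
  have h1p : 0 < 1 - p := sub_pos.mpr hp
  rw [(prelecConj_hasDerivAt hα hp).deriv, one_sub_prelecConj, mul_div_assoc',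
    div_le_div_iff_of_pos_right h1p, le_mul_iff_one_le_right (Real.exp_pos _)]

lemma one_le_mul_rpow_sub_one_iff {α u : ℝ} (hα : 1 < α) (hu : 0 ≤ u) :
    1 ≤ α * u ^ (α - 1) ↔ α ^ (-1 / (α - 1)) ≤ u := by
  have hα0 : 0 < α := by linarith
  have hα1 : 0 < α - 1 := by linarith
  have hroot : (α ^ (-1 / (α - 1))) ^ (α - 1) = α⁻¹ := by
    rw [← Real.rpow_mul hα0.le, div_mul_cancel₀ _ hα1.ne', Real.rpow_neg_one]
  rw [← Real.rpow_le_rpow_iff (Real.rpow_nonneg hα0.le _) hu hα1, hroot,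
    inv_le_iff_one_le_mul₀' hα0]

lemma le_neg_log_one_sub_iff {c p : ℝ} (hp : p < 1) :
    c ≤ -Real.log (1 - p) ↔ 1 - Real.exp (-c) ≤ p := by
  rw [le_neg, Real.log_le_iff_le_exp (sub_pos.mpr hp)]
  exact sub_le_comm

lemma prelecConj_tangency_set_eq {α : ℝ} (hα : 1 < α) :
    {p : ℝ | p ∈ Ico (0:ℝ) 1 ∧
        (1 - prelecConj α p) / (1 - p) ≤ deriv (prelecConj α) p}
      = Ico (1 - Real.exp (-(α ^ (-1 / (α - 1))))) 1 := by
  have hexp : Real.exp (-(α ^ (-1 / (α - 1)))) ≤ 1 :=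
    Real.exp_le_one_iff.mpr (neg_nonpos.mpr (Real.rpow_nonneg (by linarith) _))
  ext p
  simp only [mem_ofPred_eq, mem_Ico]
  constructor
  · rintro ⟨⟨hp0, hp1⟩, htan⟩
    have hu : 0 ≤ -Real.log (1 - p) :=
      neg_nonneg.mpr (Real.log_nonpos (by linarith) (by linarith))
    rw [prelecConj_tangency_iff hα.le hp1, one_le_mul_rpow_sub_one_iff hα hu,
      le_neg_log_one_sub_iff hp1] at htan
    exact ⟨htan, hp1⟩
  · rintro ⟨hpc, hp1⟩
    have hu : α ^ (-1 / (α - 1)) ≤ -Real.log (1 - p) := (le_neg_log_one_sub_iff hp1).mpr hpc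
    refine ⟨⟨by linarith, hp1⟩, ?_⟩
    rw [prelecConj_tangency_iff hα.le hp1,
      one_le_mul_rpow_sub_one_iff hα ((Real.rpow_nonneg (by linarith) _).trans hu)]
    exact hu

/-- For an S-shaped Prelec weighting function (`α > 1`), the tangency point
`p*(α) = inf{p ∈ [0,1) : T̃′(p) ≥ (1 − T̃(p))/(1 − p)}` equals `1 − exp(−α^{−1/(α−1)})`. -/
theorem statement11 (α : ℝ) (hα : 1 < α) :
    sInf {p : ℝ | p ∈ Ico (0:ℝ) 1 ∧
        (1 - prelecConj α p) / (1 - p) ≤ deriv (prelecConj α) p}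
      = 1 - Real.exp (-(α ^ (-1 / (α - 1)))) := by
  rw [prelecConj_tangency_set_eq hα]
  exact csInf_Ico (by linarith [Real.exp_pos (-(α ^ (-1 / (α - 1))))])

end
end

section
/- Let α ∈ (0,1) and consider the Prelec weighting function T(p) = exp(−(−ln p)^α) with conjugate T̃(p) = 1 − exp(−(−ln(1−p))^α). Then the equation x^α = ln(α x^{α−1} e^x (1 − e^{−x}) + 1) has a unique solution x > 0, and the point p*(α) := sup{p ∈ [0,1) : T̃′(p) ≤ T̃(p)/p} satisfies p*(α) = 1 − e^{−x}. -/
open Set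

noncomputable section

/-!
Substituting `p = 1 - e^{-x}`, the condition `T̃'(p) ≤ T̃(p)/p` becomes
`α x^{α-1} (e^x - 1) ≤ e^{x^α} - 1` and the equation becomes equality there, so both are
governed by the sign of the log-ratio `L` of the two sides. Write `s(u) = (e^u - 1)/u`, which
is increasing by convexity of `exp`. For `0 < x ≤ 1` we have `x ≤ x^α`, so `s(x) ≤ s(x^α)`,
which gives `L(x) > 0`. For `x > 1`, `x L'(x) = α/s(-x^α) + 1 - α - 1/s(-x)` is negative
because `0 < s(-x) < s(-x^α) < 1`. Finally `L(x) ≤ x^α/α - x + O(1) → -∞`, so `L` has a single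
zero `c`, is positive before it and negative after it, and the tangency set is
`(0, 1 - e^{-c}]` (plus possibly `0`).
-/

open Real Filter Topology

lemma exp_sub_one_pos {x : ℝ} (hx : 0 < x) : 0 < exp x - 1 :=
  sub_pos.2 (one_lt_exp_iff.2 hx)

lemma exp_sub_one_div_le_of_le {x y : ℝ} (hx : x ≠ 0) (hy : y ≠ 0) (hxy : x ≤ y) :
    (exp x - 1) / x ≤ (exp y - 1) / y := by
  simpa using convexOn_exp.secant_mono (mem_univ 0) (mem_univ x) (mem_univ y) hx hy hxy

lemma exp_sub_one_div_lt_of_lt {x y : ℝ} (hx : x ≠ 0) (hy : y ≠ 0) (hxy : x < y) :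
    (exp x - 1) / x < (exp y - 1) / y := by
  simpa using strictConvexOn_exp.secant_strict_mono (mem_univ 0) (mem_univ x) (mem_univ y)
    hx hy hxy

lemma exp_sub_one_div_pos_of_neg {x : ℝ} (hx : x < 0) : 0 < (exp x - 1) / x :=
  div_pos_of_neg_of_neg (sub_neg.2 (exp_lt_one_iff.2 hx)) hx

lemma exp_sub_one_div_lt_one_of_neg {x : ℝ} (hx : x < 0) : (exp x - 1) / x < 1 :=
  (div_lt_one_of_neg hx).2 (by linarith [add_one_lt_exp hx.ne])

/-- `log ((e^{x^α} - 1) / (α x^{α-1} (e^x - 1)))`, i.e. `log (T̃(p) / (p T̃'(p)))` at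
`p = 1 - e^{-x}`, expanded so that it is differentiable term by term. -/
def tangencyGap (α x : ℝ) : ℝ :=
  log (exp (x ^ α) - 1) - log α - (α - 1) * log x - log (exp x - 1)

variable {α x : ℝ}

lemma tangencyGap_eq_log_sub_log (hα : α ≠ 0) (hx : 0 < x) :
    tangencyGap α x = log (exp (x ^ α) - 1) - log (α * x ^ (α - 1) * (exp x - 1)) := by
  have hexp : exp x - 1 ≠ 0 := (exp_sub_one_pos hx).ne'
  rw [tangencyGap, log_mul (mul_ne_zero hα (rpow_pos_of_pos hx _).ne') hexp,
    log_mul hα (rpow_pos_of_pos hx _).ne', log_rpow hx]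
  ring

lemma tangencyGap_pos_iff (hα : 0 < α) (hx : 0 < x) :
    0 < tangencyGap α x ↔ α * x ^ (α - 1) * (exp x - 1) < exp (x ^ α) - 1 := by
  rw [tangencyGap_eq_log_sub_log hα.ne' hx, sub_pos,
    log_lt_log_iff (mul_pos (mul_pos hα (rpow_pos_of_pos hx _)) (exp_sub_one_pos hx))
      (exp_sub_one_pos (rpow_pos_of_pos hx α))]

lemma tangencyGap_nonneg_iff (hα : 0 < α) (hx : 0 < x) :
    0 ≤ tangencyGap α x ↔ α * x ^ (α - 1) * (exp x - 1) ≤ exp (x ^ α) - 1 := by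
  rw [tangencyGap_eq_log_sub_log hα.ne' hx, sub_nonneg,
    log_le_log_iff (mul_pos (mul_pos hα (rpow_pos_of_pos hx _)) (exp_sub_one_pos hx))
      (exp_sub_one_pos (rpow_pos_of_pos hx α))]

lemma hasDerivAt_tangencyGap (hx : 0 < x) :
    HasDerivAt (tangencyGap α)
      (exp (x ^ α) * (α * x ^ (α - 1)) / (exp (x ^ α) - 1) - (α - 1) * x⁻¹ -
        exp x / (exp x - 1)) x := by
  have hpow : HasDerivAt (fun y : ℝ => y ^ α) (α * x ^ (α - 1)) x :=
    hasDerivAt_rpow_const (Or.inl hx.ne')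
  have hA := ((hpow.exp.sub_const 1).log
    (exp_sub_one_pos (rpow_pos_of_pos hx α)).ne')
  have hB := ((hasDerivAt_exp x).sub_const 1).log (exp_sub_one_pos hx).ne'
  exact ((hA.sub_const (log α)).sub ((hasDerivAt_log hx.ne').const_mul (α - 1))).sub hB

lemma tangencyGap_pos_of_le_one (hα : α ∈ Ioo 0 1) (hx : 0 < x) (hx1 : x ≤ 1) :
    0 < tangencyGap α x := by
  have hxα : x ≤ x ^ α := by
    simpa using rpow_le_rpow_of_exponent_ge hx hx1 hα.2.le
  have hxα0 : x ^ α ≠ 0 := (rpow_pos_of_pos hx α).ne'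
  have hsecant : x ^ (α - 1) * (exp x - 1) ≤ exp (x ^ α) - 1 :=
    calc x ^ (α - 1) * (exp x - 1) = (exp x - 1) / x * x ^ α := by
          rw [rpow_sub_one hx.ne']; ring
      _ ≤ (exp (x ^ α) - 1) / x ^ α * x ^ α := by
          gcongr ?_ * _; exact exp_sub_one_div_le_of_le hx.ne' hxα0 hxα
      _ = exp (x ^ α) - 1 := div_mul_cancel₀ _ hxα0
  have hQ : 0 < x ^ (α - 1) * (exp x - 1) :=
    mul_pos (rpow_pos_of_pos hx _) (exp_sub_one_pos hx)
  rw [tangencyGap_pos_iff hα.1 hx, mul_assoc]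
  nlinarith [hα.2]

lemma mul_deriv_tangencyGap (hx : 0 < x) :
    x * deriv (tangencyGap α) x =
      α / ((exp (-x ^ α) - 1) / -x ^ α) + (1 - α) - 1 / ((exp (-x) - 1) / -x) := by
  have hxα : 0 < x ^ α := rpow_pos_of_pos hx α
  have hA := exp_sub_one_pos hxα
  have hB := exp_sub_one_pos hx
  have hA' : 1 - exp (x ^ α) ≠ 0 := by linarith
  have hB' : 1 - exp x ≠ 0 := by linarith
  rw [(hasDerivAt_tangencyGap hx).deriv, exp_neg, exp_neg, rpow_sub_one hx.ne']
  field_simp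
  ring

lemma deriv_tangencyGap_neg (hα : α ∈ Ioo 0 1) (hx : 1 < x) : deriv (tangencyGap α) x < 0 := by
  have hx0 : 0 < x := one_pos.trans hx
  have hxα : x ^ α < x := by simpa using rpow_lt_rpow_of_exponent_lt hx hα.2
  have hxα0 : 0 < x ^ α := rpow_pos_of_pos hx0 α
  set s := fun u : ℝ => (exp u - 1) / u
  have hs : s (-x) < s (-x ^ α) :=
    exp_sub_one_div_lt_of_lt (by linarith) (by linarith) (by linarith)
  have hs0 : 0 < s (-x) := exp_sub_one_div_pos_of_neg (by linarith)
  have hs1 : s (-x) < 1 := exp_sub_one_div_lt_one_of_neg (by linarith)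
  have hinv : 1 / s (-x ^ α) < 1 / s (-x) := one_div_lt_one_div_of_lt hs0 hs
  have hone : 1 < 1 / s (-x) := by rwa [lt_one_div one_pos hs0, div_one]
  have key : x * deriv (tangencyGap α) x < 0 := by
    rw [mul_deriv_tangencyGap hx0]
    change α / s (-x ^ α) + (1 - α) - 1 / s (-x) < 0
    rw [div_eq_mul_one_div α]
    linarith [mul_lt_mul_of_pos_left hinv hα.1, mul_lt_mul_of_pos_left hone (sub_pos.2 hα.2)]
  exact neg_of_mul_neg_right key hx0.le

lemma tangencyGap_strictAntiOn (hα : α ∈ Ioo 0 1) : StrictAntiOn (tangencyGap α) (Ici 1) := by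
  refine strictAntiOn_of_deriv_neg (convex_Ici 1) (fun y hy => ?_) (fun y hy => ?_)
  · exact (hasDerivAt_tangencyGap (one_pos.trans_le hy)).continuousAt.continuousWithinAt
  · rw [interior_Ici] at hy
    exact deriv_tangencyGap_neg hα hy

lemma tangencyGap_le (hα : α ∈ Ioo 0 1) (hx : 1 ≤ x) :
    tangencyGap α x ≤ x ^ α / α - x + (1 - log α) := by
  have hx0 : 0 < x := one_pos.trans_le hx
  have hxα : 0 < x ^ α := rpow_pos_of_pos hx0 α
  have hlogA : log (exp (x ^ α) - 1) ≤ x ^ α := by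
    simpa using log_le_log (exp_sub_one_pos hxα) (sub_le_self (exp (x ^ α)) one_pos.le)
  have hlogB : x - 1 ≤ log (exp x - 1) := by
    have htwo : 2 ≤ exp 1 := by linarith [add_one_le_exp 1]
    have hexp : exp (x - 1) ≤ exp x - 1 := by
      rw [show exp x = exp (x - 1) * exp 1 by rw [← exp_add, sub_add_cancel]]
      nlinarith [one_le_exp (sub_nonneg.2 hx)]
    simpa using log_le_log (exp_pos _) hexp
  have hlogx : α * log x ≤ x ^ α := by
    rw [← log_rpow hx0]; linarith [log_le_sub_one_of_pos hxα]
  have hpowlog : x ^ α + (1 - α) * log x ≤ x ^ α / α := by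
    rw [le_div_iff₀ hα.1]
    nlinarith [mul_le_mul_of_nonneg_left hlogx (sub_nonneg.2 hα.2.le)]
  rw [tangencyGap]
  linarith

lemma exists_tangencyGap_neg (hα : α ∈ Ioo 0 1) : ∃ x, 1 < x ∧ tangencyGap α x < 0 := by
  have hpow : Tendsto (fun x : ℝ => x ^ (α - 1) / α - 1) atTop (𝓝 (0 / α - 1)) := by
    have := tendsto_rpow_neg_atTop (sub_pos.2 hα.2)
    rw [neg_sub] at this
    exact (this.div_const α).sub_const 1
  have hlin : Tendsto (fun x : ℝ => x ^ α / α - x + (1 - log α)) atTop atBot := by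
    refine tendsto_atBot_add_const_right _ _ ?_
    refine (tendsto_id.atTop_mul_neg (by norm_num) hpow).congr' ?_
    filter_upwards [eventually_gt_atTop 0] with x hx
    rw [id, mul_sub, mul_one, mul_div_assoc', mul_comm, ← rpow_add_one hx.ne', sub_add_cancel]
  obtain ⟨x, hneg, hx1⟩ := ((hlin.eventually_lt_atBot 0).and (eventually_gt_atTop 1)).exists
  exact ⟨x, hx1, (tangencyGap_le hα hx1.le).trans_lt hneg⟩

lemma exists_sign_tangencyGap (hα : α ∈ Ioo 0 1) :
    ∃ c, 0 < c ∧ ∀ x, 0 < x → SignType.sign (tangencyGap α x) = SignType.sign (c - x) := by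
  obtain ⟨b, hb1, hb⟩ := exists_tangencyGap_neg hα
  have hcont : ContinuousOn (tangencyGap α) (Icc 1 b) := fun y hy =>
    (hasDerivAt_tangencyGap (one_pos.trans_le hy.1)).continuousAt.continuousWithinAt
  obtain ⟨c, hc, hc0⟩ := intermediate_value_Icc' hb1.le hcont
    ⟨hb.le, (tangencyGap_pos_of_le_one hα one_pos le_rfl).le⟩
  have hanti := tangencyGap_strictAntiOn hα
  refine ⟨c, one_pos.trans_le hc.1, fun x hx => ?_⟩
  rcases lt_trichotomy x c with hxc | rfl | hcx
  · rw [sign_pos (sub_pos.2 hxc), sign_pos]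
    rcases le_or_gt x 1 with hx1 | hx1
    · exact tangencyGap_pos_of_le_one hα hx hx1
    · exact hc0 ▸ hanti hx1.le (hx1.le.trans hxc.le) hxc
  · rw [hc0, sub_self]
  · rw [_root_.sign_neg (sub_neg.2 hcx), _root_.sign_neg]
    exact hc0 ▸ hanti hc.1 (hc.1.trans hcx.le) hcx

lemma rpow_eq_log_iff_tangencyGap_eq_zero (hα : 0 < α) (hx : 0 < x) :
    x ^ α = log (α * x ^ (α - 1) * exp x * (1 - exp (-x)) + 1) ↔ tangencyGap α x = 0 := by
  have hQ : 0 < α * x ^ (α - 1) * (exp x - 1) :=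
    mul_pos (mul_pos hα (rpow_pos_of_pos hx _)) (exp_sub_one_pos hx)
  have hA := exp_sub_one_pos (rpow_pos_of_pos hx α)
  rw [tangencyGap_eq_log_sub_log hα.ne' hx, sub_eq_zero, log_injOn_pos.eq_iff hA hQ,
    mul_assoc _ (exp x), mul_one_sub, ← exp_add, add_neg_cancel, exp_zero,
    ← exp_eq_exp, exp_log (by linarith), sub_eq_iff_eq_add]

lemma hasDerivAt_prelecConj {p : ℝ} (hp : p < 1) (hp0 : p ≠ 0) :
    HasDerivAt (prelecConj α)
      (α * (-log (1 - p)) ^ (α - 1) * exp (-(-log (1 - p)) ^ α) / (1 - p)) p := by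
  have hlog : -log (1 - p) ≠ 0 :=
    neg_ne_zero.2 <| log_ne_zero_of_pos_of_ne_one (sub_pos.2 hp) (by simpa [sub_eq_self] using hp0)
  have hinner : HasDerivAt (fun q => -log (1 - q)) (1 / (1 - p)) p :=
    (((hasDerivAt_id' p).const_sub 1).log (sub_pos.2 hp).ne').neg.congr_deriv (by ring)
  exact ((hinner.rpow_const (p := α) (Or.inl hlog)).neg.exp.const_sub 1).congr_deriv
    (by simp only [Pi.neg_apply]; ring)

lemma hasDerivAt_prelecConj_one_sub_exp_neg (hx : x ≠ 0) :
    HasDerivAt (prelecConj α) (α * x ^ (α - 1) * exp (-x ^ α) * exp x) (1 - exp (-x)) := by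
  convert hasDerivAt_prelecConj (α := α) (sub_lt_self 1 (exp_pos (-x))) ?_ using 1
  · rw [sub_sub_cancel, log_exp, neg_neg, exp_neg x, div_inv_eq_mul]
  · exact sub_ne_zero.2 fun h => hx (neg_eq_zero.1 ((exp_eq_one_iff _).1 h.symm))

lemma prelecConj_one_sub_exp_neg : prelecConj α (1 - exp (-x)) = 1 - exp (-x ^ α) := by
  rw [prelecConj, sub_sub_cancel, log_exp, neg_neg]

lemma deriv_prelecConj_le_div_iff (hα : 0 < α) (hx : 0 < x) :
    deriv (prelecConj α) (1 - exp (-x)) ≤ prelecConj α (1 - exp (-x)) / (1 - exp (-x)) ↔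
      0 ≤ tangencyGap α x := by
  have hexp (y : ℝ) : exp y * exp (-y) = 1 := by rw [← exp_add, add_neg_cancel, exp_zero]
  have hlhs : α * x ^ (α - 1) * exp (-x ^ α) * exp x * (1 - exp (-x)) =
      exp (-x ^ α) * (α * x ^ (α - 1) * (exp x - 1)) := by
    linear_combination (-(α * x ^ (α - 1) * exp (-x ^ α))) * hexp x
  have hrhs : 1 - exp (-x ^ α) = exp (-x ^ α) * (exp (x ^ α) - 1) := by
    linear_combination -hexp (x ^ α)
  rw [(hasDerivAt_prelecConj_one_sub_exp_neg hx.ne').deriv, prelecConj_one_sub_exp_neg,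
    le_div_iff₀ (sub_pos.2 (exp_lt_one_iff.2 (neg_neg_of_pos hx))), hlhs, hrhs,
    mul_le_mul_iff_right₀ (exp_pos _), tangencyGap_nonneg_iff hα hx]

lemma isGreatest_tangencySet {c : ℝ} (hα : 0 < α) (hc : 0 < c)
    (hgap : ∀ x, 0 < x → (0 ≤ tangencyGap α x ↔ x ≤ c)) :
    IsGreatest {p : ℝ | p ∈ Ico (0:ℝ) 1 ∧ deriv (prelecConj α) p ≤ prelecConj α p / p}
      (1 - exp (-c)) := by
  have hc1 : exp (-c) < 1 := exp_lt_one_iff.2 (neg_neg_of_pos hc)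
  refine ⟨⟨⟨by linarith, by linarith [exp_pos (-c)]⟩,
    (deriv_prelecConj_le_div_iff hα hc).2 ((hgap c hc).2 le_rfl)⟩, ?_⟩
  rintro p ⟨⟨hp0, hp1⟩, hp⟩
  rcases hp0.eq_or_lt with rfl | hp0
  · linarith
  have hx : 0 < -log (1 - p) := neg_pos.2 (log_neg (sub_pos.2 hp1) (by linarith))
  have hpx : p = 1 - exp (-(-log (1 - p))) := by
    rw [neg_neg, exp_log (sub_pos.2 hp1), sub_sub_cancel]
  rw [hpx] at hp ⊢
  have hxc := (hgap _ hx).1 ((deriv_prelecConj_le_div_iff hα hx).1 hp)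
  exact sub_le_sub_left (exp_le_exp.2 (neg_le_neg hxc)) 1

/-- For an inverse S-shaped Prelec weighting function (`α ∈ (0,1)`), the
equation `x^α = ln(α x^{α−1} e^x (1 − e^{−x}) + 1)` has a unique positive solution `x`,
and the tangency point `p*(α) = sup{p ∈ [0,1) : T̃′(p) ≤ T̃(p)/p}` equals `1 − e^{−x}`. -/
theorem statement12 (α : ℝ) (hα : α ∈ Ioo (0:ℝ) 1) :
    (∃! x : ℝ, 0 < x ∧
        x ^ α = Real.log (α * x ^ (α - 1) * Real.exp x * (1 - Real.exp (-x)) + 1))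
    ∧
    (∀ x : ℝ, 0 < x →
        x ^ α = Real.log (α * x ^ (α - 1) * Real.exp x * (1 - Real.exp (-x)) + 1) →
        sSup {p : ℝ | p ∈ Ico (0:ℝ) 1 ∧
            deriv (prelecConj α) p ≤ prelecConj α p / p}
          = 1 - Real.exp (-x)) := by
  obtain ⟨c, hc, hsign⟩ := exists_sign_tangencyGap hα
  have hzero : ∀ x, 0 < x → (tangencyGap α x = 0 ↔ x = c) := fun x hx => by
    rw [← _root_.sign_eq_zero_iff, hsign x hx, _root_.sign_eq_zero_iff, sub_eq_zero, eq_comm]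
  have hnonneg : ∀ x, 0 < x → (0 ≤ tangencyGap α x ↔ x ≤ c) := fun x hx => by
    rw [← _root_.sign_nonneg_iff, hsign x hx, _root_.sign_nonneg_iff, sub_nonneg]
  have hroot : ∀ x, 0 < x →
      (x ^ α = log (α * x ^ (α - 1) * exp x * (1 - exp (-x)) + 1) ↔ x = c) :=
    fun x hx => (rpow_eq_log_iff_tangencyGap_eq_zero hα.1 hx).trans (hzero x hx)
  refine ⟨⟨c, ⟨hc, (hroot c hc).2 rfl⟩, fun x hx => (hroot x hx.1).1 hx.2⟩, fun x hx hx' => ?_⟩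
  obtain rfl := (hroot x hx).1 hx'
  exact (isGreatest_tangencySet hα.1 hx hnonneg).csSup_eq

end
end

section
/- Let T̃ : [0,1] → [0,1] be continuously differentiable and increasing with T̃(0) = 0 and T̃(1) = 1, let δ be its convex envelope on [0,1], assumed differentiable on (0,1), let u : ℝ → ℝ be nondecreasing, and let f : (0,1) → ℝ be a nondecreasing, left-continuous bounded function. Then ∫₀¹ u(f(t))·T̃′(t) dt ≤ ∫₀¹ u(f(t))·δ′(t) dt. -/
open MeasureTheory Set

/-!
Put `k = g' - δ'`. A `C¹` function `g` is `K`-Lipschitz on `[0,1]`, so `g 0 - K t` and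
`g 1 - K (1 - t)` are affine minorants of `g`, hence of `δ`; therefore `δ` agrees with `g` at both
endpoints and, by monotonicity of secant slopes, is `K`-Lipschitz too. Consequently
`∫ₛ¹ k = δ s - g s ≤ 0` for all `s`, with equality at `s = 0`. The bounded nondecreasing function
`u ∘ f` extends to a monotone (hence measurable) function `ψ` on `ℝ`. By the layer-cake formula
and Fubini, `∫ (ψ - ψ 0) k` is an integral over `c` of `∫_{ψ > c} k`; each superlevel set meets
`(0,1)` in an interval `(s,1)` up to a null set, so these are all `≤ 0`.
-/

open scoped NNReal

section Majorization

variable {a b : ℝ} {ψ k p q : ℝ → ℝ}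

theorem setIntegral_Ioo_indicator_nonpos_of_isUpperSet {S : Set ℝ} (hS : IsUpperSet S)
    (htail : ∀ s ∈ Ico a b, ∫ t in Ioo s b, k t ≤ 0) :
    ∫ t in Ioo a b, S.indicator k t ≤ 0 := by
  rw [setIntegral_indicator hS.ordConnected.measurableSet]
  rcases (Ioo a b ∩ S).eq_empty_or_nonempty with hempty | hne
  · simp [hempty]
  have hbdd : BddBelow (Ioo a b ∩ S) := ⟨a, fun t ht => ht.1.1.le⟩
  set s := sInf (Ioo a b ∩ S)
  obtain ⟨t₀, ht₀⟩ := hne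
  have has : a ≤ s := le_csInf ⟨t₀, ht₀⟩ fun t ht => ht.1.1.le
  have hsb : s < b := (csInf_le hbdd ht₀).trans_lt ht₀.1.2
  have hsub : Ioo s b ⊆ Ioo a b ∩ S := fun t ht => by
    obtain ⟨t', ht', ht't⟩ := exists_lt_of_csInf_lt ⟨t₀, ht₀⟩ ht.1
    exact ⟨⟨has.trans_lt ht.1, ht.2⟩, hS ht't.le ht'.2⟩
  have hsup : Ioo a b ∩ S ⊆ Icc s b := fun t ht => ⟨csInf_le hbdd ht, ht.1.2.le⟩
  have hae : (Ioo a b ∩ S : Set ℝ) =ᵐ[volume] (Ioo s b : Set ℝ) :=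
    (hsup.eventuallyLE.trans Ioo_ae_eq_Icc.symm.le).antisymm hsub.eventuallyLE
  rw [setIntegral_congr_set hae]
  exact htail s ⟨has, hsb⟩

theorem setIntegral_Ioo_mul_nonpos_of_monotone (hψ : Monotone ψ) (hψa : 0 ≤ ψ a)
    (hk : IntegrableOn k (Ioo a b)) (htail : ∀ s ∈ Ico a b, ∫ t in Ioo s b, k t ≤ 0) :
    ∫ t in Ioo a b, ψ t * k t ≤ 0 := by
  set F : ℝ → ℝ → ℝ := fun t c => {t | c < ψ t}.indicator k t
  have hlayer : ∀ t ∈ Ioo a b, ψ t * k t = ∫ c in Ioo 0 (ψ b), F t c := by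
    intro t ht
    have hF : (fun c => F t c) = (Iio (ψ t)).indicator fun _ => k t := by
      ext c; simp [F, indicator]
    rw [hF, setIntegral_indicator measurableSet_Iio, Ioo_inter_Iio,
      min_eq_right (hψ ht.2.le), setIntegral_const,
      Real.volume_real_Ioo_of_le (hψa.trans (hψ ht.1.le)), sub_zero, smul_eq_mul]
  have hFint : Integrable (Function.uncurry F)
      ((volume.restrict (Ioo a b)).prod (volume.restrict (Ioo 0 (ψ b)))) := by
    have hmeas : MeasurableSet {p : ℝ × ℝ | p.2 < ψ p.1} :=
      measurableSet_lt measurable_snd (hψ.measurable.comp measurable_fst)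
    have hF : Function.uncurry F = {p : ℝ × ℝ | p.2 < ψ p.1}.indicator fun p => k p.1 := by
      ext p; simp [F, indicator, Function.uncurry]
    rw [hF]
    exact (hk.norm.mul_prod (integrable_const (1 : ℝ))).mono' (hk.1.comp_fst.indicator hmeas)
      (Filter.Eventually.of_forall fun p => by
        simpa using norm_indicator_le_norm_self (fun p : ℝ × ℝ => k p.1) p)
  calc ∫ t in Ioo a b, ψ t * k t = ∫ t in Ioo a b, ∫ c in Ioo 0 (ψ b), F t c :=
        setIntegral_congr_fun measurableSet_Ioo hlayer
    _ = ∫ c in Ioo 0 (ψ b), ∫ t in Ioo a b, F t c := integral_integral_swap hFint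
    _ ≤ 0 := integral_nonpos fun c =>
        setIntegral_Ioo_indicator_nonpos_of_isUpperSet
          (fun _ _ hxy hx => lt_of_lt_of_le hx (hψ hxy)) htail

theorem Monotone.integrableOn_Ioo_mul (hψ : Monotone ψ) (hp : IntegrableOn p (Ioo a b)) :
    IntegrableOn (fun t => ψ t * p t) (Ioo a b) := by
  refine hp.bdd_mul (c := max |ψ a| |ψ b|) hψ.measurable.aestronglyMeasurable ?_
  filter_upwards [ae_restrict_mem measurableSet_Ioo] with t ht
  exact abs_le_max_abs_abs (hψ ht.1.le) (hψ ht.2.le)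

theorem setIntegral_Ioo_mul_le_of_tail_le (hψ : Monotone ψ) (hp : IntegrableOn p (Ioo a b))
    (hq : IntegrableOn q (Ioo a b)) (htot : ∫ t in Ioo a b, p t = ∫ t in Ioo a b, q t)
    (htail : ∀ s ∈ Ico a b, ∫ t in Ioo s b, p t ≤ ∫ t in Ioo s b, q t) :
    ∫ t in Ioo a b, ψ t * p t ≤ ∫ t in Ioo a b, ψ t * q t := by
  have hk : IntegrableOn (p - q) (Ioo a b) := hp.sub hq
  have hψ' : Monotone fun t => ψ t - ψ a := fun x y hxy => sub_le_sub_right (hψ hxy) _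
  have hnonpos : ∫ t in Ioo a b, (ψ t - ψ a) * (p - q) t ≤ 0 := by
    refine setIntegral_Ioo_mul_nonpos_of_monotone hψ' (sub_self _).ge hk fun s hs => ?_
    have hsub : Ioo s b ⊆ Ioo a b := Ioo_subset_Ioo_left hs.1
    rw [Pi.sub_def, integral_sub (hp.mono_set hsub) (hq.mono_set hsub)]
    exact sub_nonpos.2 (htail s hs)
  have hzero : ∫ t in Ioo a b, ψ a * (p - q) t = 0 := by
    rw [integral_const_mul, Pi.sub_def, integral_sub hp hq, htot, sub_self, mul_zero]
  have hsplit : ∀ t, ψ t * p t - ψ t * q t = (ψ t - ψ a) * (p - q) t + ψ a * (p - q) t :=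
    fun t => by simp only [Pi.sub_apply]; ring
  rw [← sub_nonpos, ← integral_sub (hψ.integrableOn_Ioo_mul hp) (hψ.integrableOn_Ioo_mul hq)]
  simp_rw [hsplit]
  rwa [integral_add (hψ'.integrableOn_Ioo_mul hk) (hk.const_mul _), hzero, add_zero]

end Majorization

namespace LipschitzOnWith

variable {h : ℝ → ℝ} {K : ℝ≥0} {a b : ℝ}

theorem integrableOn_deriv (hh : LipschitzOnWith K h (Icc a b)) :
    IntegrableOn (deriv h) (Ioo a b) :=
  Measure.integrableOn_of_bounded measure_Ioo_lt_top.ne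
    (measurable_deriv h).aestronglyMeasurable (M := K) <| by
      filter_upwards [ae_restrict_mem measurableSet_Ioo] with t ht
      exact norm_deriv_le_of_lipschitzOn (Icc_mem_nhds ht.1 ht.2) hh

theorem integral_Ioo_deriv (hh : LipschitzOnWith K h (Icc a b))
    (hd : ∀ t ∈ Ioo a b, DifferentiableAt ℝ h t) (hab : a ≤ b) :
    ∫ t in Ioo a b, deriv h t = h b - h a := by
  rw [← integral_Ioc_eq_integral_Ioo, ← intervalIntegral.integral_of_le hab]
  exact intervalIntegral.integral_eq_sub_of_hasDerivAt_of_le hab hh.continuousOn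
    (fun t ht => (hd t ht).hasDerivAt)
    ((intervalIntegrable_iff_integrableOn_Ioo_of_le hab).2 hh.integrableOn_deriv)

end LipschitzOnWith

namespace IsConvexEnvelope

variable {g δ : ℝ → ℝ} {K : ℝ≥0}

theorem affine_le (hδ : IsConvexEnvelope g δ) {m c : ℝ}
    (h : ∀ t ∈ Icc (0:ℝ) 1, m * t + c ≤ g t) : ∀ t ∈ Icc (0:ℝ) 1, m * t + c ≤ δ t :=
  hδ.2.2 _ (((LinearMap.mul ℝ ℝ m).convexOn (convex_Icc 0 1)).add
    (convexOn_const c (convex_Icc 0 1))) h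

theorem sub_mul_le (hδ : IsConvexEnvelope g δ) (hg : LipschitzOnWith K g (Icc 0 1))
    {t : ℝ} (ht : t ∈ Icc (0:ℝ) 1) : g 0 - K * t ≤ δ t ∧ g 1 - K * (1 - t) ≤ δ t := by
  have h0 : (0:ℝ) ∈ Icc (0:ℝ) 1 := left_mem_Icc.2 zero_le_one
  have h1 : (1:ℝ) ∈ Icc (0:ℝ) 1 := right_mem_Icc.2 zero_le_one
  constructor
  · have := hδ.affine_le (m := -K) (c := g 0) (fun s hs => by
      have := hg.le_add_mul h0 hs
      rw [Real.dist_eq, abs_of_nonpos (by linarith [hs.1])] at this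
      linarith) t ht
    linarith
  · have := hδ.affine_le (m := K) (c := g 1 - K) (fun s hs => by
      have := hg.le_add_mul h1 hs
      rw [Real.dist_eq, abs_of_nonneg (by linarith [hs.2])] at this
      linarith) t ht
    linarith

theorem apply_zero (hδ : IsConvexEnvelope g δ) (hg : LipschitzOnWith K g (Icc 0 1)) :
    δ 0 = g 0 :=
  le_antisymm (hδ.2.1 0 (left_mem_Icc.2 zero_le_one))
    (by simpa using (hδ.sub_mul_le hg (left_mem_Icc.2 zero_le_one)).1)

theorem apply_one (hδ : IsConvexEnvelope g δ) (hg : LipschitzOnWith K g (Icc 0 1)) :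
    δ 1 = g 1 :=
  le_antisymm (hδ.2.1 1 (right_mem_Icc.2 zero_le_one))
    (by simpa using (hδ.sub_mul_le hg (right_mem_Icc.2 zero_le_one)).2)

theorem lipschitzOnWith (hδ : IsConvexEnvelope g δ) (hg : LipschitzOnWith K g (Icc 0 1)) :
    LipschitzOnWith K δ (Icc 0 1) := by
  have h0 : (0:ℝ) ∈ Icc (0:ℝ) 1 := left_mem_Icc.2 zero_le_one
  have h1 : (1:ℝ) ∈ Icc (0:ℝ) 1 := right_mem_Icc.2 zero_le_one
  refine LipschitzOnWith.of_le_add_mul K fun x hx y hy => ?_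
  rcases lt_trichotomy x y with hxy | rfl | hxy
  · have hleft : -(K:ℝ) ≤ (δ 0 - δ y) / (0 - y) := by
      rw [le_div_iff_of_neg (by linarith [hx.1])]
      linarith [(hδ.sub_mul_le hg hy).1, hδ.apply_zero hg]
    have hslope := hleft.trans (hδ.1.secant_mono hy h0 hx (by linarith [hx.1]) hxy.ne hx.1)
    rw [le_div_iff_of_neg (sub_neg.2 hxy)] at hslope
    rw [Real.dist_eq, abs_of_neg (sub_neg.2 hxy)]
    linarith
  · simp
  · have hright : (δ 1 - δ y) / (1 - y) ≤ K := by
      rw [div_le_iff₀ (by linarith [hx.2])]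
      linarith [(hδ.sub_mul_le hg hy).2, hδ.apply_one hg]
    have hslope :=
      (hδ.1.secant_mono hy hx h1 hxy.ne' (by linarith [hx.2]) hx.2).trans hright
    rw [div_le_iff₀ (sub_pos.2 hxy)] at hslope
    rw [Real.dist_eq, abs_of_pos (sub_pos.2 hxy)]
    linarith

end IsConvexEnvelope

theorem statement19_general
    (g : ℝ → ℝ)
    (hg : ContDiffOn ℝ 1 g (Icc (0:ℝ) 1))
    (δ : ℝ → ℝ) (hδ : IsConvexEnvelope g δ)
    (hδdiff : ∀ t ∈ Ioo (0:ℝ) 1, DifferentiableAt ℝ δ t)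
    (u : ℝ → ℝ) (hu : Monotone u)
    (f : ℝ → ℝ) (hf : MonotoneOn f (Ioo (0:ℝ) 1))
    (hfbdd : ∃ C : ℝ, ∀ t ∈ Ioo (0:ℝ) 1, |f t| ≤ C) :
    (∫ t in Ioo (0:ℝ) 1, u (f t) * deriv g t)
      ≤ ∫ t in Ioo (0:ℝ) 1, u (f t) * deriv δ t := by
  obtain ⟨C, hC⟩ := hfbdd
  obtain ⟨ψ, hψ, hψeq⟩ := (hu.comp_monotoneOn hf).exists_monotone_extension
    ⟨u (-C), by rintro _ ⟨t, ht, rfl⟩; exact hu (abs_le.1 (hC t ht)).1⟩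
    ⟨u C, by rintro _ ⟨t, ht, rfl⟩; exact hu (abs_le.1 (hC t ht)).2⟩
  obtain ⟨K, hgK⟩ := hg.exists_lipschitzOnWith one_ne_zero (convex_Icc 0 1) isCompact_Icc
  have hδK := hδ.lipschitzOnWith hgK
  have hgd : ∀ t ∈ Ioo (0:ℝ) 1, DifferentiableAt ℝ g t := fun t ht =>
    (hg.differentiableOn one_ne_zero t (Ioo_subset_Icc_self ht)).differentiableAt
      (Icc_mem_nhds ht.1 ht.2)
  have htail : ∀ {h : ℝ → ℝ}, LipschitzOnWith K h (Icc 0 1) →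
      (∀ t ∈ Ioo (0:ℝ) 1, DifferentiableAt ℝ h t) →
      ∀ s ∈ Ico (0:ℝ) 1, ∫ t in Ioo s 1, deriv h t = h 1 - h s := fun hh hd s hs =>
    (hh.mono (Icc_subset_Icc_left hs.1)).integral_Ioo_deriv
      (fun t ht => hd t ⟨hs.1.trans_lt ht.1, ht.2⟩) hs.2.le
  have h0 : (0:ℝ) ∈ Ico (0:ℝ) 1 := ⟨le_rfl, zero_lt_one⟩
  have hcongr : ∀ d : ℝ → ℝ,
      ∫ t in Ioo (0:ℝ) 1, u (f t) * d t = ∫ t in Ioo (0:ℝ) 1, ψ t * d t :=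
    fun d => setIntegral_congr_fun measurableSet_Ioo fun t ht => congrArg (· * d t) (hψeq ht)
  rw [hcongr, hcongr]
  refine setIntegral_Ioo_mul_le_of_tail_le hψ hgK.integrableOn_deriv hδK.integrableOn_deriv
    ?_ fun s hs => ?_
  · rw [htail hgK hgd 0 h0, htail hδK hδdiff 0 h0, hδ.apply_zero hgK, hδ.apply_one hgK]
  · rw [htail hgK hgd s hs, htail hδK hδdiff s hs, hδ.apply_one hgK]
    linarith [hδ.2.1 s (Ico_subset_Icc_self hs)]

/-- If `δ` is the convex envelope of `T̃` on `[0,1]`, `u` is nondecreasing,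
and `f` is a nondecreasing, left-continuous bounded function on `(0,1)`, then
`∫₀¹ u(f(t)) T̃′(t) dt ≤ ∫₀¹ u(f(t)) δ′(t) dt`. -/
theorem statement19
    (g : ℝ → ℝ)
    (hmap : ∀ t ∈ Icc (0:ℝ) 1, g t ∈ Icc (0:ℝ) 1)
    (hg : ContDiffOn ℝ 1 g (Icc (0:ℝ) 1))
    (hmono : MonotoneOn g (Icc (0:ℝ) 1))
    (h0 : g 0 = 0) (h1 : g 1 = 1)
    (δ : ℝ → ℝ) (hδ : IsConvexEnvelope g δ)
    (hδdiff : ∀ t ∈ Ioo (0:ℝ) 1, DifferentiableAt ℝ δ t)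
    (u : ℝ → ℝ) (hu : Monotone u)
    (f : ℝ → ℝ) (hf : MonotoneOn f (Ioo (0:ℝ) 1))
    (hflc : ∀ t ∈ Ioo (0:ℝ) 1, ContinuousWithinAt f (Iic t) t)
    (hfbdd : ∃ C : ℝ, ∀ t ∈ Ioo (0:ℝ) 1, |f t| ≤ C) :
    (∫ t in Ioo (0:ℝ) 1, u (f t) * deriv g t)
      ≤ ∫ t in Ioo (0:ℝ) 1, u (f t) * deriv δ t :=
  statement19_general g hg δ hδ hδdiff u hu f hf hfbdd
end
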